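/- arXiv:1606.06844 — 10 statements merged into one kernel-verified Lean document; each statement's English description precedes it below -/
import Mathlib

section
/- For every t ≥ 0, the function f satisfies the Euler–Bernoulli energy identity F(t) = F(0); that is, the energy F(t) = ½∫₀¹ [ (∂ₜw(x,t))² + (∂ₓ²w(x,t))² ] dx is constant in t. -/
open Real MeasureTheory intervalIntegral

noncomputable def pd (v : ℝ × ℝ) (f : ℝ × ℝ → ℝ) : ℝ × ℝ → ℝ := fun p => fderiv ℝ f p v

lemma pd_contDiff {f : ℝ × ℝ → ℝ} {n m : WithTop ℕ∞} (hf : ContDiff ℝ n f)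
    (h : m + 1 ≤ n) (v : ℝ × ℝ) : ContDiff ℝ m (pd v f) :=
  (hf.fderiv_right h).clm_apply contDiff_const

lemma sliceT {f : ℝ × ℝ → ℝ} (hf : Differentiable ℝ f) (x t : ℝ) :
    HasDerivAt (fun τ => f (x, τ)) (pd (0, 1) f (x, t)) t := by
  have h1 : HasDerivAt (fun τ : ℝ => ((x, τ) : ℝ × ℝ)) (((0 : ℝ), (1 : ℝ)) : ℝ × ℝ) t :=
    (hasDerivAt_const t x).prodMk (hasDerivAt_id t)
  exact (hf (x, t)).hasFDerivAt.comp_hasDerivAt t h1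

lemma sliceX {f : ℝ × ℝ → ℝ} (hf : Differentiable ℝ f) (x t : ℝ) :
    HasDerivAt (fun ξ => f (ξ, t)) (pd (1, 0) f (x, t)) x := by
  have h1 : HasDerivAt (fun ξ : ℝ => ((ξ, t) : ℝ × ℝ)) (((1 : ℝ), (0 : ℝ)) : ℝ × ℝ) x :=
    (hasDerivAt_id x).prodMk (hasDerivAt_const x t)
  exact (hf (x, t)).hasFDerivAt.comp_hasDerivAt x h1

lemma pd_comm {f : ℝ × ℝ → ℝ} (hf : ContDiff ℝ 2 f) (v u : ℝ × ℝ) (p : ℝ × ℝ) :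
    pd v (pd u f) p = pd u (pd v f) p := by
  have hdf : Differentiable ℝ f := hf.differentiable (by norm_num)
  have hC1 : ContDiff ℝ 1 (fderiv ℝ f) := hf.fderiv_right (by norm_num)
  have hdf' : DifferentiableAt ℝ (fderiv ℝ f) p := (hC1.differentiable (by norm_num)) p
  have hsymm := second_derivative_symmetric (f' := fderiv ℝ f)
    (f'' := fderiv ℝ (fderiv ℝ f) p) (fun y => (hdf y).hasFDerivAt) hdf'.hasFDerivAt
  have key : ∀ a b : ℝ × ℝ, pd a (pd b f) p = fderiv ℝ (fderiv ℝ f) p a b := by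
    intro a b
    have h := fderiv_clm_apply (c := fderiv ℝ f) (u := fun _ => b) hdf'
      (differentiableAt_const b)
    have hb : pd b f = fun q => (fderiv ℝ f q) b := rfl
    simp only [pd, hb, h]
    simp
  rw [key, key, hsymm]

lemma slice_fun_x {f : ℝ × ℝ → ℝ} (hf : Differentiable ℝ f) (t : ℝ) :
    deriv (fun ξ => f (ξ, t)) = fun x => pd (1, 0) f (x, t) :=
  funext fun x => (sliceX hf x t).deriv

lemma slice_fun_t {f : ℝ × ℝ → ℝ} (hf : Differentiable ℝ f) (x : ℝ) :
    deriv (fun τ => f (x, τ)) = fun t => pd (0, 1) f (x, t) :=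
  funext fun t => (sliceT hf x t).deriv

/-- Main analytic lemma, in terms of partial derivatives. -/
lemma eb_energy_aux (u : ℝ × ℝ → ℝ) (hu : ContDiff ℝ 4 u)
    (heq : ∀ x ∈ Set.Icc (0:ℝ) 1, ∀ s ≥ (0:ℝ),
      pd (0,1) (pd (0,1) u) (x,s) + pd (1,0) (pd (1,0) (pd (1,0) (pd (1,0) u))) (x,s) = 0)
    (hbc : ∀ s ≥ (0:ℝ), u (0,s) = 0 ∧ pd (1,0) u (0,s) = 0 ∧
      pd (1,0) (pd (1,0) u) (1,s) = 0 ∧ pd (1,0) (pd (1,0) (pd (1,0) u)) (1,s) = 0)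
    (t : ℝ) (ht : 0 ≤ t) :
    (∫ x in (0:ℝ)..1, (pd (0,1) u (x,t))^2 + (pd (1,0) (pd (1,0) u) (x,t))^2)
      = ∫ x in (0:ℝ)..1, (pd (0,1) u (x,0))^2 + (pd (1,0) (pd (1,0) u) (x,0))^2 := by
  have hd : Differentiable ℝ u := hu.differentiable (by norm_num)
  set ut := pd (0,1) u with hut_def
  set ux := pd (1,0) u with hux_def
  set utt := pd (0,1) ut with hutt_def
  set utx := pd (1,0) ut with hutx_def
  set uxx := pd (1,0) ux with huxx_def
  set uxt := pd (0,1) ux with huxt_def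
  set uxxx := pd (1,0) uxx with huxxx_def
  set uxxt := pd (0,1) uxx with huxxt_def
  set utxx := pd (1,0) utx with hutxx_def
  set uxxxx := pd (1,0) uxxx with huxxxx_def
  have hut3 : ContDiff ℝ 3 ut := pd_contDiff hu (by norm_num) _
  have hux3 : ContDiff ℝ 3 ux := pd_contDiff hu (by norm_num) _
  have hutt2 : ContDiff ℝ 2 utt := pd_contDiff hut3 (by norm_num) _
  have hutx2 : ContDiff ℝ 2 utx := pd_contDiff hut3 (by norm_num) _
  have huxx2 : ContDiff ℝ 2 uxx := pd_contDiff hux3 (by norm_num) _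
  have huxxx1 : ContDiff ℝ 1 uxxx := pd_contDiff huxx2 (by norm_num) _
  have huxxt1 : ContDiff ℝ 1 uxxt := pd_contDiff huxx2 (by norm_num) _
  have hutxx1 : ContDiff ℝ 1 utxx := pd_contDiff hutx2 (by norm_num) _
  have huxxxx0 : Continuous uxxxx :=
    (pd_contDiff huxxx1 (by norm_num) _ : ContDiff ℝ 0 uxxxx).continuous
  -- mixed derivative symmetry
  have hmix1 : uxt = utx := funext fun p => pd_comm (hu.of_le (by norm_num)) (0,1) (1,0) p
  have hmix : uxxt = utxx := by
    funext p
    have h1 : uxxt p = pd (1,0) uxt p := pd_comm (hux3.of_le (by norm_num)) (0,1) (1,0) p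
    rw [h1, hmix1]
  -- derivative of the energy density in time
  have hde : ∀ x s : ℝ, HasDerivAt (fun s => (ut (x,s))^2 + (uxx (x,s))^2)
      (2*(ut (x,s) * utt (x,s) + uxx (x,s) * uxxt (x,s))) s := by
    intro x s
    have h1 := sliceT (hut3.differentiable (by norm_num)) x s
    have h2 := sliceT (huxx2.differentiable (by norm_num)) x s
    have h := (h1.pow 2).add (h2.pow 2)
    refine h.congr_deriv ?_
    push_cast
    ring
  set de : ℝ × ℝ → ℝ := fun p => 2*(ut p * utt p + uxx p * uxxt p) with hde_def
  have hcont_de : Continuous de := by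
    apply Continuous.mul continuous_const
    exact ((hut3.continuous.mul hutt2.continuous).add
      (huxx2.continuous.mul huxxt1.continuous))
  -- FTC in time
  have hftc : ∀ x : ℝ, (ut (x,t))^2 + (uxx (x,t))^2 - ((ut (x,0))^2 + (uxx (x,0))^2)
      = ∫ s in (0:ℝ)..t, de (x,s) := by
    intro x
    exact (intervalIntegral.integral_eq_sub_of_hasDerivAt (fun s _ => hde x s)
      ((hcont_de.comp (Continuous.prodMk_right x)).intervalIntegrable 0 t)).symm
  have hInt : ∀ s : ℝ, IntervalIntegrable (fun x => (ut (x,s))^2 + (uxx (x,s))^2) volume 0 1 := by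
    intro s
    exact (((hut3.continuous.comp (by continuity : Continuous fun x : ℝ => ((x, s) : ℝ × ℝ))).pow 2).add
      ((huxx2.continuous.comp (by continuity : Continuous fun x : ℝ => ((x, s) : ℝ × ℝ))).pow 2)).intervalIntegrable 0 1
  rw [← sub_eq_zero, ← intervalIntegral.integral_sub (hInt t) (hInt 0)]
  have step1 : (∫ x in (0:ℝ)..1, ((ut (x,t))^2 + (uxx (x,t))^2 - ((ut (x,0))^2 + (uxx (x,0))^2)))
      = ∫ x in (0:ℝ)..1, ∫ s in (0:ℝ)..t, de (x,s) :=
    intervalIntegral.integral_congr fun x _ => hftc x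
  rw [step1]
  -- Fubini
  have h01 : (0:ℝ) ≤ 1 := by norm_num
  have hintegrable : Integrable (Function.uncurry fun x s => de (x,s))
      ((volume.restrict (Set.Ioc (0:ℝ) 1)).prod (volume.restrict (Set.Ioc (0:ℝ) t))) := by
    rw [Measure.prod_restrict, ← Measure.volume_eq_prod]
    have hcc : IntegrableOn de (Set.Icc (0:ℝ) 1 ×ˢ Set.Icc (0:ℝ) t) volume :=
      hcont_de.continuousOn.integrableOn_compact (isCompact_Icc.prod isCompact_Icc)
    exact hcc.mono_set (Set.prod_mono Set.Ioc_subset_Icc_self Set.Ioc_subset_Icc_self)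
  rw [intervalIntegral.integral_of_le h01]
  simp only [intervalIntegral.integral_of_le ht]
  rw [MeasureTheory.integral_integral_swap hintegrable]
  -- inner integral vanishes for s > 0
  have inner_zero : ∀ s ∈ Set.Ioc (0:ℝ) t, (∫ x in Set.Ioc (0:ℝ) 1, de (x,s)) = 0 := by
    intro s hs
    have hs0 : (0:ℝ) < s := hs.1
    rw [← intervalIntegral.integral_of_le h01]
    -- boundary values
    have hut0 : ut (0,s) = 0 := by
      have heq0 : (fun τ => u (0,τ)) =ᶠ[nhds s] (fun _ => (0:ℝ)) := by
        filter_upwards [Ioi_mem_nhds hs0] with τ hτ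
        exact (hbc τ (le_of_lt hτ)).1
      have h := (sliceT hd 0 s).congr_of_eventuallyEq heq0.symm
      exact h.unique (hasDerivAt_const s 0)
    have hutx0 : utx (0,s) = 0 := by
      rw [← hmix1]
      have heq0 : (fun τ => ux (0,τ)) =ᶠ[nhds s] (fun _ => (0:ℝ)) := by
        filter_upwards [Ioi_mem_nhds hs0] with τ hτ
        exact (hbc τ (le_of_lt hτ)).2.1
      have h := (sliceT (hux3.differentiable (by norm_num)) 0 s).congr_of_eventuallyEq heq0.symm
      exact h.unique (hasDerivAt_const s 0)
    have hb := hbc s (le_of_lt hs0)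
    -- integration by parts (FTC in x)
    have hG : ∀ x : ℝ, HasDerivAt (fun ξ => uxx (ξ,s) * utx (ξ,s) - uxxx (ξ,s) * ut (ξ,s))
        (uxx (x,s) * utxx (x,s) - uxxxx (x,s) * ut (x,s)) x := by
      intro x
      have h1 := sliceX (huxx2.differentiable (by norm_num)) x s
      have h2 := sliceX (hutx2.differentiable (by norm_num)) x s
      have h3 := sliceX (huxxx1.differentiable (by norm_num)) x s
      have h4 := sliceX (hut3.differentiable (by norm_num)) x s
      have h := (h1.mul h2).sub (h3.mul h4)
      refine h.congr_deriv ?_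
      ring
    have hGcont : Continuous (fun x => uxx (x,s) * utxx (x,s) - uxxxx (x,s) * ut (x,s)) := by
      have hc : Continuous fun x : ℝ => ((x, s) : ℝ × ℝ) := by continuity
      exact ((huxx2.continuous.comp hc).mul (hutxx1.continuous.comp hc)).sub
        ((huxxxx0.comp hc).mul (hut3.continuous.comp hc))
    have hIBP : (∫ x in (0:ℝ)..1, (uxx (x,s) * utxx (x,s) - uxxxx (x,s) * ut (x,s)))
        = (uxx (1,s) * utx (1,s) - uxxx (1,s) * ut (1,s))
          - (uxx (0,s) * utx (0,s) - uxxx (0,s) * ut (0,s)) :=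
      intervalIntegral.integral_eq_sub_of_hasDerivAt (fun x _ => hG x)
        (hGcont.intervalIntegrable 0 1)
    have hcong : (∫ x in (0:ℝ)..1, de (x,s))
        = ∫ x in (0:ℝ)..1, 2*(uxx (x,s) * utxx (x,s) - uxxxx (x,s) * ut (x,s)) := by
      apply intervalIntegral.integral_congr
      intro x hx
      have hx' : x ∈ Set.Icc (0:ℝ) 1 := by rwa [Set.uIcc_of_le h01] at hx
      have hbeam := heq x hx' s (le_of_lt hs0)
      have h1 : utt (x,s) = - uxxxx (x,s) := by linarith
      simp only [hde_def, hmix, h1]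
      ring
    rw [hcong, intervalIntegral.integral_const_mul, hIBP, hb.2.2.1, hb.2.2.2, hut0, hutx0]
    ring
  rw [MeasureTheory.setIntegral_congr_fun measurableSet_Ioc inner_zero]
  simp

lemma iter_t2 {f : ℝ × ℝ → ℝ} (hf : ContDiff ℝ 4 f) (x s : ℝ) :
    iteratedDeriv 2 (fun τ => f (x, τ)) s = pd (0,1) (pd (0,1) f) (x, s) := by
  have hd := hf.differentiable (by norm_num)
  have h3 : ContDiff ℝ 3 (pd (0,1) f) := pd_contDiff hf (by norm_num) _
  rw [iteratedDeriv_succ, iteratedDeriv_one, slice_fun_t hd x]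
  exact (sliceT (h3.differentiable (by norm_num)) x s).deriv

lemma iter_x2 {f : ℝ × ℝ → ℝ} (hf : ContDiff ℝ 4 f) (x s : ℝ) :
    iteratedDeriv 2 (fun ξ => f (ξ, s)) x = pd (1,0) (pd (1,0) f) (x, s) := by
  have hd := hf.differentiable (by norm_num)
  have h3 : ContDiff ℝ 3 (pd (1,0) f) := pd_contDiff hf (by norm_num) _
  rw [iteratedDeriv_succ, iteratedDeriv_one, slice_fun_x hd s]
  exact (sliceX (h3.differentiable (by norm_num)) x s).deriv

lemma iter_x3 {f : ℝ × ℝ → ℝ} (hf : ContDiff ℝ 4 f) (x s : ℝ) :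
    iteratedDeriv 3 (fun ξ => f (ξ, s)) x = pd (1,0) (pd (1,0) (pd (1,0) f)) (x, s) := by
  have h2 : ContDiff ℝ 2 (pd (1,0) (pd (1,0) f)) :=
    pd_contDiff (pd_contDiff hf (by norm_num) _ : ContDiff ℝ 3 (pd (1,0) f)) (by norm_num) _
  have funeq2 : iteratedDeriv 2 (fun ξ => f (ξ, s)) = fun x => pd (1,0) (pd (1,0) f) (x, s) :=
    funext fun x => iter_x2 hf x s
  rw [iteratedDeriv_succ, funeq2]
  exact (sliceX (h2.differentiable (by norm_num)) x s).deriv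

lemma iter_x4 {f : ℝ × ℝ → ℝ} (hf : ContDiff ℝ 4 f) (x s : ℝ) :
    iteratedDeriv 4 (fun ξ => f (ξ, s)) x
      = pd (1,0) (pd (1,0) (pd (1,0) (pd (1,0) f))) (x, s) := by
  have h1 : ContDiff ℝ 1 (pd (1,0) (pd (1,0) (pd (1,0) f))) :=
    pd_contDiff (pd_contDiff (pd_contDiff hf (by norm_num) _ : ContDiff ℝ 3 (pd (1,0) f))
      (by norm_num) _ : ContDiff ℝ 2 (pd (1,0) (pd (1,0) f))) (by norm_num) _
  have funeq3 : iteratedDeriv 3 (fun ξ => f (ξ, s))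
      = fun x => pd (1,0) (pd (1,0) (pd (1,0) f)) (x, s) := funext fun x => iter_x3 hf x s
  rw [iteratedDeriv_succ, funeq3]
  exact (sliceX (h1.differentiable (by norm_num)) x s).deriv

/-- Energy conservation for the Euler–Bernoulli beam with boundary conditions
`w(0,t) = wₓ(0,t) = wₓₓ(1,t) = wₓₓₓ(1,t) = 0`: the energy
`F(t) = ½∫₀¹ (wₜ² + wₓₓ²) dx` is constant, i.e. `F(t) = F(0)` for all `t ≥ 0`. -/
theorem euler_bernoulli_energy_conservation
    (w : ℝ → ℝ → ℝ)
    (hw : ContDiff ℝ 4 (fun p : ℝ × ℝ => w p.1 p.2))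
    (heq : ∀ x ∈ Set.Icc (0:ℝ) 1, ∀ t ≥ (0:ℝ),
      iteratedDeriv 2 (fun τ => w x τ) t + iteratedDeriv 4 (fun ξ => w ξ t) x = 0)
    (hbc : ∀ t ≥ (0:ℝ),
      w 0 t = 0 ∧ deriv (fun ξ => w ξ t) 0 = 0 ∧
      iteratedDeriv 2 (fun ξ => w ξ t) 1 = 0 ∧
      iteratedDeriv 3 (fun ξ => w ξ t) 1 = 0)
    (F : ℝ → ℝ)
    (hF : ∀ t, F t = (1/2) * ∫ x in (0:ℝ)..1,
      (deriv (fun τ => w x τ) t) ^ 2 + (iteratedDeriv 2 (fun ξ => w ξ t) x) ^ 2) :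
    ∀ t ≥ (0:ℝ), F t = F 0 := by
  intro t ht
  have hd : Differentiable ℝ (fun p : ℝ × ℝ => w p.1 p.2) := hw.differentiable (by norm_num)
  have T1 : ∀ x s : ℝ, deriv (fun τ => w x τ) s
      = pd (0,1) (fun p : ℝ × ℝ => w p.1 p.2) (x, s) := fun x s => (sliceT hd x s).deriv
  have X1 : ∀ x s : ℝ, deriv (fun ξ => w ξ s) x
      = pd (1,0) (fun p : ℝ × ℝ => w p.1 p.2) (x, s) := fun x s => (sliceX hd x s).deriv
  have T2 : ∀ x s : ℝ, iteratedDeriv 2 (fun τ => w x τ) s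
      = pd (0,1) (pd (0,1) (fun p : ℝ × ℝ => w p.1 p.2)) (x, s) := fun x s => iter_t2 hw x s
  have X2 : ∀ x s : ℝ, iteratedDeriv 2 (fun ξ => w ξ s) x
      = pd (1,0) (pd (1,0) (fun p : ℝ × ℝ => w p.1 p.2)) (x, s) := fun x s => iter_x2 hw x s
  have X3 : ∀ x s : ℝ, iteratedDeriv 3 (fun ξ => w ξ s) x
      = pd (1,0) (pd (1,0) (pd (1,0) (fun p : ℝ × ℝ => w p.1 p.2)))
        (x, s) := fun x s => iter_x3 hw x s
  have X4 : ∀ x s : ℝ, iteratedDeriv 4 (fun ξ => w ξ s) x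
      = pd (1,0) (pd (1,0) (pd (1,0) (pd (1,0) (fun p : ℝ × ℝ => w p.1 p.2))))
        (x, s) := fun x s => iter_x4 hw x s
  have heq' : ∀ x ∈ Set.Icc (0:ℝ) 1, ∀ s ≥ (0:ℝ),
      pd (0,1) (pd (0,1) (fun p : ℝ × ℝ => w p.1 p.2)) (x,s)
        + pd (1,0) (pd (1,0) (pd (1,0) (pd (1,0) (fun p : ℝ × ℝ => w p.1 p.2)))) (x,s) = 0 := by
    intro x hx s hs
    rw [← T2 x s, ← X4 x s]
    exact heq x hx s hs
  have hbc' : ∀ s ≥ (0:ℝ), (fun p : ℝ × ℝ => w p.1 p.2) (0,s) = 0 ∧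
      pd (1,0) (fun p : ℝ × ℝ => w p.1 p.2) (0,s) = 0 ∧
      pd (1,0) (pd (1,0) (fun p : ℝ × ℝ => w p.1 p.2)) (1,s) = 0 ∧
      pd (1,0) (pd (1,0) (pd (1,0) (fun p : ℝ × ℝ => w p.1 p.2))) (1,s) = 0 := by
    intro s hs
    obtain ⟨h1, h2, h3, h4⟩ := hbc s hs
    exact ⟨h1, by rw [← X1 0 s]; exact h2, by rw [← X2 1 s]; exact h3, by rw [← X3 1 s]; exact h4⟩
  rw [hF t, hF 0]
  congr 1
  calc (∫ x in (0:ℝ)..1,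
        (deriv (fun τ => w x τ) t) ^ 2 + (iteratedDeriv 2 (fun ξ => w ξ t) x) ^ 2)
      = ∫ x in (0:ℝ)..1, (pd (0,1) (fun p : ℝ × ℝ => w p.1 p.2) (x,t))^2
          + (pd (1,0) (pd (1,0) (fun p : ℝ × ℝ => w p.1 p.2)) (x,t))^2 :=
        intervalIntegral.integral_congr fun x _ => by rw [T1 x t, X2 x t]
    _ = ∫ x in (0:ℝ)..1, (pd (0,1) (fun p : ℝ × ℝ => w p.1 p.2) (x,0))^2
          + (pd (1,0) (pd (1,0) (fun p : ℝ × ℝ => w p.1 p.2)) (x,0))^2 :=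
        eb_energy_aux _ hw heq' hbc' t ht
    _ = ∫ x in (0:ℝ)..1,
        (deriv (fun τ => w x τ) 0) ^ 2 + (iteratedDeriv 2 (fun ξ => w ξ 0) x) ^ 2 :=
        (intervalIntegral.integral_congr fun x _ => by rw [T1 x 0, X2 x 0]).symm
end

section
/- Let u : [0,1] → ℝ be twice continuously differentiable with u(0) = 0 and u′(0) = 0, and let v : [0,1] → ℝ be continuous. Then |∫₀¹ x(x−1) v(x) u′(x) dx| ≤ ½ ∫₀¹ [ v(x)² + u″(x)² ] dx. -/
open Real MeasureTheory intervalIntegral Set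

/-- If `u` is C² on `[0,1]` with `u(0) = u′(0) = 0` and `v` is continuous on
`[0,1]`, then `|∫₀¹ x(x−1) v(x) u′(x) dx| ≤ ½ ∫₀¹ (v(x)² + u″(x)²) dx`. -/
theorem multiplier_dominated_by_energy
    (u v : ℝ → ℝ)
    (hu : ContDiffOn ℝ 2 u (Set.Icc (0:ℝ) 1))
    (hu0 : u 0 = 0)
    (hu'0 : derivWithin u (Set.Icc (0:ℝ) 1) 0 = 0)
    (hv : ContinuousOn v (Set.Icc (0:ℝ) 1)) :
    |∫ x in (0:ℝ)..1, x * (x - 1) * v x * derivWithin u (Set.Icc (0:ℝ) 1) x| ≤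
      (1/2) * ∫ x in (0:ℝ)..1,
        (v x) ^ 2 + (iteratedDerivWithin 2 u (Set.Icc (0:ℝ) 1) x) ^ 2 := by
  set s : Set ℝ := Set.Icc (0:ℝ) 1 with hs
  have hsu : UniqueDiffOn ℝ s := uniqueDiffOn_Icc one_pos
  set U : ℝ → ℝ := derivWithin u s with hU
  set W : ℝ → ℝ := iteratedDerivWithin 2 u s with hW
  -- continuity of U and W on s
  have hUc : ContinuousOn U s := by
    have := (hu.derivWithin hsu (m := 1) (by norm_num)).continuousOn
    simpa [hU] using this
  have hWc : ContinuousOn W s := by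
    have := hu.continuousOn_iteratedDerivWithin (m := 2) le_rfl hsu
    simpa [hW] using this
  -- U has derivative W on the interior
  have hderiv : ∀ t ∈ Set.Ioo (0:ℝ) 1, HasDerivAt U (W t) t := by
    intro t ht
    have hts : t ∈ s := Set.mem_Icc.2 ⟨ht.1.le, ht.2.le⟩
    have hUd : DifferentiableOn ℝ U s := by
      have := hu.derivWithin hsu (m := 1) (by norm_num)
      exact this.differentiableOn one_ne_zero
    have h1 : HasDerivWithinAt U (derivWithin U s t) s t :=
      (hUd t hts).hasDerivWithinAt
    have hW2 : W t = derivWithin U s t := by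
      have e1 : iteratedDerivWithin 2 u s t
          = derivWithin (iteratedDerivWithin 1 u s) s t :=
        congrFun iteratedDerivWithin_succ t
      have e2 : derivWithin (iteratedDerivWithin 1 u s) s t = derivWithin U s t :=
        derivWithin_congr (fun y hy => congrFun iteratedDerivWithin_one y)
          (congrFun iteratedDerivWithin_one t)
      exact e1.trans e2
    rw [hW2]
    exact h1.hasDerivAt (Icc_mem_nhds ht.1 ht.2)
  -- interval integrability
  have hWi : IntervalIntegrable W volume 0 1 := by
    apply ContinuousOn.intervalIntegrable
    rw [Set.uIcc_of_le zero_le_one]; exact hWc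
  have hWai : IntervalIntegrable (fun t => |W t|) volume 0 1 := hWi.abs
  have hW2i : IntervalIntegrable (fun t => W t ^ 2) volume 0 1 := by
    apply ContinuousOn.intervalIntegrable
    rw [Set.uIcc_of_le zero_le_one]
    exact hWc.pow 2
  have hv2i : IntervalIntegrable (fun t => v t ^ 2) volume 0 1 := by
    apply ContinuousOn.intervalIntegrable
    rw [Set.uIcc_of_le zero_le_one]
    exact hv.pow 2
  -- FTC : U x = ∫ t in 0..x, W t for x ∈ s
  have hFTC : ∀ x ∈ s, U x = ∫ t in (0:ℝ)..x, W t := by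
    intro x hx
    obtain ⟨hx0, hx1⟩ := Set.mem_Icc.1 hx
    have : (∫ t in (0:ℝ)..x, W t) = U x - U 0 := by
      apply integral_eq_sub_of_hasDeriv_right_of_le hx0
        (hUc.mono (Set.Icc_subset_Icc le_rfl hx1))
      · intro t ht
        exact (hderiv t ⟨ht.1, lt_of_lt_of_le ht.2 hx1⟩).hasDerivWithinAt
      · exact hWi.mono_set (by
          rw [Set.uIcc_of_le hx0, Set.uIcc_of_le zero_le_one]
          exact Set.Icc_subset_Icc le_rfl hx1)
    linarith [this, hu'0]
  set B : ℝ := ∫ t in (0:ℝ)..1, |W t| with hB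
  set I : ℝ := ∫ t in (0:ℝ)..1, W t ^ 2 with hI
  have hInn : 0 ≤ I := by
    apply intervalIntegral.integral_nonneg zero_le_one
    intro t _; positivity
  have hBnn : 0 ≤ B := by
    apply intervalIntegral.integral_nonneg zero_le_one
    intro t _; positivity
  -- |U x| ≤ B on s
  have hUB : ∀ x ∈ s, |U x| ≤ B := by
    intro x hx
    obtain ⟨hx0, hx1⟩ := Set.mem_Icc.1 hx
    rw [hFTC x hx]
    calc |∫ t in (0:ℝ)..x, W t| ≤ ∫ t in (0:ℝ)..x, |W t| :=
          intervalIntegral.abs_integral_le_integral_abs hx0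
      _ ≤ B := by
          apply intervalIntegral.integral_mono_interval le_rfl hx0 hx1
          · filter_upwards with t using abs_nonneg _
          · exact hWai
  -- B ^ 2 ≤ I
  have hBI : B ^ 2 ≤ I := by
    have key : ∀ ε > (0:ℝ), B ^ 2 ≤ I + ε := by
      intro ε hε
      set c : ℝ := Real.sqrt (I + ε) with hc
      have hcpos : 0 < c := Real.sqrt_pos.2 (by linarith)
      have hcsq : c ^ 2 = I + ε := Real.sq_sqrt (by linarith)
      have hBle : B ≤ (c + I / c) / 2 := by
        have step1 : B ≤ ∫ t in (0:ℝ)..1, (c + W t ^ 2 / c) / 2 := by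
          apply intervalIntegral.integral_mono_on zero_le_one hWai
          · apply ContinuousOn.intervalIntegrable
            rw [Set.uIcc_of_le zero_le_one]
            exact ((continuousOn_const.add ((hWc.pow 2).div_const c)).div_const 2)
          · intro t _
            have h1 : 0 ≤ (|W t| - c) ^ 2 / c := div_nonneg (sq_nonneg _) hcpos.le
            have h2 : (|W t| - c) ^ 2 / c = W t ^ 2 / c - 2 * |W t| + c := by
              rw [sub_sq, sq_abs]; field_simp
            rw [h2] at h1
            rw [le_div_iff₀ two_pos]
            linarith
        have step2 : (∫ t in (0:ℝ)..1, (c + W t ^ 2 / c) / 2) = (c + I / c) / 2 := by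
          rw [intervalIntegral.integral_div,
            intervalIntegral.integral_add intervalIntegrable_const (hW2i.div_const c),
            intervalIntegral.integral_const, intervalIntegral.integral_div, hI]
          simp
        linarith [step1, step2.le]
      have hBc : B ≤ c := by
        have hIc : I / c ≤ c := by
          rw [div_le_iff₀ hcpos, ← sq]
          linarith
        linarith
      calc B ^ 2 ≤ c ^ 2 := by nlinarith
        _ = I + ε := hcsq
    by_contra h
    push_neg at h
    have := key ((B ^ 2 - I) / 2) (by linarith)
    linarith
  -- pointwise bound on the integrand
  have hpt : ∀ x ∈ s, |x * (x - 1) * v x * U x| ≤ (1/8) * v x ^ 2 + (1/8) * B ^ 2 := by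
    intro x hx
    obtain ⟨hx0, hx1⟩ := Set.mem_Icc.1 hx
    have h1 : |x * (x - 1)| ≤ 1/4 := by
      rw [abs_le]; constructor <;> nlinarith [sq_nonneg (x - 1/2)]
    have h2 := hUB x hx
    have h3 : |x * (x - 1) * v x * U x| = |x * (x - 1)| * |v x| * |U x| := by
      rw [abs_mul, abs_mul]
    rw [h3]
    have h4 : |x * (x - 1)| * |v x| * |U x| ≤ (1/4) * (|v x| * B) := by
      have := mul_le_mul h1 le_rfl (abs_nonneg (v x)) (by norm_num : (0:ℝ) ≤ 1/4)
      have h5 : |x * (x - 1)| * |v x| * |U x| ≤ (1/4 * |v x|) * B :=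
        mul_le_mul this h2 (abs_nonneg _) (by positivity)
      linarith [h5]
    have h6 : |v x| * B ≤ (1/2) * v x ^ 2 + (1/2) * B ^ 2 := by
      nlinarith [sq_nonneg (|v x| - B), sq_abs (v x)]
    linarith
  -- integrability of the integrand
  have hfc : ContinuousOn (fun x => x * (x - 1) * v x * U x) s := by
    apply ContinuousOn.mul _ hUc
    exact ((continuousOn_id.mul (continuousOn_id.sub continuousOn_const)).mul hv)
  have hfi : IntervalIntegrable (fun x => x * (x - 1) * v x * U x) volume 0 1 := by
    apply ContinuousOn.intervalIntegrable
    rw [Set.uIcc_of_le zero_le_one]; exact hfc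
  -- main chain
  have hgi : IntervalIntegrable (fun x => (1/8) * v x ^ 2 + (1/8) * B ^ 2) volume 0 1 :=
    (hv2i.const_mul _).add intervalIntegrable_const
  have main : |∫ x in (0:ℝ)..1, x * (x - 1) * v x * U x| ≤
      (1/8) * (∫ x in (0:ℝ)..1, v x ^ 2) + (1/8) * B ^ 2 := by
    calc |∫ x in (0:ℝ)..1, x * (x - 1) * v x * U x|
        ≤ ∫ x in (0:ℝ)..1, |x * (x - 1) * v x * U x| :=
          intervalIntegral.abs_integral_le_integral_abs zero_le_one
      _ ≤ ∫ x in (0:ℝ)..1, ((1/8) * v x ^ 2 + (1/8) * B ^ 2) := by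
          apply intervalIntegral.integral_mono_on zero_le_one hfi.abs hgi
          intro x hx
          exact hpt x hx
      _ = (1/8) * (∫ x in (0:ℝ)..1, v x ^ 2) + (1/8) * B ^ 2 := by
          rw [intervalIntegral.integral_add (hv2i.const_mul _) intervalIntegrable_const,
            intervalIntegral.integral_const_mul, intervalIntegral.integral_const]
          simp
  have hrhs : (∫ x in (0:ℝ)..1, (v x) ^ 2 + W x ^ 2)
      = (∫ x in (0:ℝ)..1, v x ^ 2) + I := by
    rw [hI, intervalIntegral.integral_add hv2i hW2i]
  have hv2nn : 0 ≤ ∫ x in (0:ℝ)..1, v x ^ 2 := by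
    apply intervalIntegral.integral_nonneg zero_le_one
    intro t _; positivity
  calc |∫ x in (0:ℝ)..1, x * (x - 1) * v x * U x|
      ≤ (1/8) * (∫ x in (0:ℝ)..1, v x ^ 2) + (1/8) * B ^ 2 := main
    _ ≤ (1/2) * ((∫ x in (0:ℝ)..1, v x ^ 2) + I) := by nlinarith
    _ = (1/2) * ∫ x in (0:ℝ)..1, (v x) ^ 2 + W x ^ 2 := by rw [hrhs]
end

section
/- For every T > 0, the boundary trace of the slope at the right endpoint satisfies the admissibility estimate ∫₀ᵀ (∂ₓw(1,t))² dt ≤ (3T + 2) F(0). -/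
open Real MeasureTheory intervalIntegral


noncomputable section
namespace EBAux

/-- directional partial derivative -/
def pd (v : ℝ × ℝ) (f : ℝ × ℝ → ℝ) : ℝ × ℝ → ℝ := fun p => fderiv ℝ f p v

lemma contDiff_pd {n : ℕ} {f : ℝ × ℝ → ℝ} (hf : ContDiff ℝ (n + 1 : ℕ) f) (v : ℝ × ℝ) :
    ContDiff ℝ (n : ℕ) (pd v f) := by
  have h : ContDiff ℝ (n : ℕ) (fderiv ℝ f) := hf.fderiv_right (by exact_mod_cast le_rfl)
  exact h.clm_apply contDiff_const

lemma hasDerivAt_sec1 {f : ℝ × ℝ → ℝ} (hf : Differentiable ℝ f) (x t : ℝ) :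
    HasDerivAt (fun ξ => f (ξ, t)) (pd (1, 0) f (x, t)) x := by
  have h1 : HasDerivAt (fun ξ : ℝ => (ξ, t)) ((1 : ℝ), (0 : ℝ)) x := by
    simpa using (hasDerivAt_id x).prodMk (hasDerivAt_const x t)
  exact ((hf (x, t)).hasFDerivAt.comp_hasDerivAt x h1)

lemma hasDerivAt_sec2 {f : ℝ × ℝ → ℝ} (hf : Differentiable ℝ f) (x t : ℝ) :
    HasDerivAt (fun τ => f (x, τ)) (pd (0, 1) f (x, t)) t := by
  have h1 : HasDerivAt (fun τ : ℝ => (x, τ)) ((0 : ℝ), (1 : ℝ)) t := by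
    simpa using (hasDerivAt_const t x).prodMk (hasDerivAt_id t)
  exact ((hf (x, t)).hasFDerivAt.comp_hasDerivAt t h1)

lemma pd_pd {f : ℝ × ℝ → ℝ} (hf : ContDiff ℝ 2 f) (p u v : ℝ × ℝ) :
    pd u (pd v f) p = fderiv ℝ (fderiv ℝ f) p u v := by
  have hdf : DifferentiableAt ℝ (fderiv ℝ f) p := by
    have : ContDiff ℝ (1 : ℕ) (fderiv ℝ f) := hf.fderiv_right (by norm_num)
    exact (this.differentiable (by norm_num)).differentiableAt
  have h : HasFDerivAt (pd v f)
      ((ContinuousLinearMap.apply ℝ ℝ v).comp (fderiv ℝ (fderiv ℝ f) p)) p :=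
    (ContinuousLinearMap.apply ℝ ℝ v).hasFDerivAt.comp p hdf.hasFDerivAt
  simp [pd, h.fderiv]

lemma pd_comm {f : ℝ × ℝ → ℝ} (hf : ContDiff ℝ 2 f) (p u v : ℝ × ℝ) :
    pd u (pd v f) p = pd v (pd u f) p := by
  rw [pd_pd hf p u v, pd_pd hf p v u]
  exact ((hf.contDiffAt (x := p)).isSymmSndFDerivAt (by norm_num)) u v

end EBAux

namespace EBAux

def e1 : ℝ × ℝ := (1, 0)
def e2 : ℝ × ℝ := (0, 1)

def unc (w : ℝ → ℝ → ℝ) : ℝ × ℝ → ℝ := fun p => w p.1 p.2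
def w10 (w : ℝ → ℝ → ℝ) := pd e1 (unc w)
def w01 (w : ℝ → ℝ → ℝ) := pd e2 (unc w)
def w20 (w : ℝ → ℝ → ℝ) := pd e1 (w10 w)
def w30 (w : ℝ → ℝ → ℝ) := pd e1 (w20 w)
def w40 (w : ℝ → ℝ → ℝ) := pd e1 (w30 w)
def w02 (w : ℝ → ℝ → ℝ) := pd e2 (w01 w)
def w11 (w : ℝ → ℝ → ℝ) := pd e2 (w10 w)
def u11 (w : ℝ → ℝ → ℝ) := pd e1 (w01 w)
def u21 (w : ℝ → ℝ → ℝ) := pd e1 (u11 w)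
def w21 (w : ℝ → ℝ → ℝ) := pd e2 (w20 w)

lemma diff_of_contDiff {n : ℕ} {f : ℝ × ℝ → ℝ} (h : ContDiff ℝ (n : ℕ) f) (hn : 1 ≤ n) :
    Differentiable ℝ f := h.differentiable (by exact_mod_cast (show n ≠ 0 by omega))

lemma contDiff_pd' {n m : ℕ} {f : ℝ × ℝ → ℝ} (h : ContDiff ℝ (m : ℕ) f) (hm : n + 1 ≤ m)
    (v : ℝ × ℝ) : ContDiff ℝ (n : ℕ) (pd v f) :=
  contDiff_pd (h.of_le (by exact_mod_cast hm)) v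

section W
variable {w : ℝ → ℝ → ℝ} (hw : ContDiff ℝ (4 : ℕ) (unc w))

include hw

lemma sm10 : ContDiff ℝ (3 : ℕ) (w10 w) := contDiff_pd' hw (by norm_num) e1
lemma sm01 : ContDiff ℝ (3 : ℕ) (w01 w) := contDiff_pd' hw (by norm_num) e2
lemma sm20 : ContDiff ℝ (2 : ℕ) (w20 w) := contDiff_pd' (sm10 hw) (by norm_num) e1
lemma sm30 : ContDiff ℝ (1 : ℕ) (w30 w) := contDiff_pd' (sm20 hw) (by norm_num) e1
lemma sm40 : ContDiff ℝ (0 : ℕ) (w40 w) := contDiff_pd' (sm30 hw) (by norm_num) e1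
lemma sm02 : ContDiff ℝ (2 : ℕ) (w02 w) := contDiff_pd' (sm01 hw) (by norm_num) e2
lemma sm11 : ContDiff ℝ (2 : ℕ) (w11 w) := contDiff_pd' (sm10 hw) (by norm_num) e2
lemma smu11 : ContDiff ℝ (2 : ℕ) (u11 w) := contDiff_pd' (sm01 hw) (by norm_num) e1
lemma smu21 : ContDiff ℝ (1 : ℕ) (u21 w) := contDiff_pd' (smu11 hw) (by norm_num) e1
lemma sm21 : ContDiff ℝ (1 : ℕ) (w21 w) := contDiff_pd' (sm20 hw) (by norm_num) e2

lemma hasD_s10 (x t : ℝ) : HasDerivAt (fun ξ => w ξ t) (w10 w (x, t)) x :=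
  hasDerivAt_sec1 (diff_of_contDiff hw (by norm_num)) x t

lemma hasD_t01 (x t : ℝ) : HasDerivAt (fun τ => w x τ) (w01 w (x, t)) t :=
  hasDerivAt_sec2 (diff_of_contDiff hw (by norm_num)) x t

lemma L_s1 (x t : ℝ) : deriv (fun ξ => w ξ t) x = w10 w (x, t) := (hasD_s10 hw x t).deriv

lemma L_s2 (x t : ℝ) : iteratedDeriv 2 (fun ξ => w ξ t) x = w20 w (x, t) := by
  have h1 : deriv (fun ξ => w ξ t) = fun ξ => w10 w (ξ, t) := funext fun ξ => L_s1 hw ξ t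
  have : iteratedDeriv 2 (fun ξ => w ξ t) x = deriv (deriv (fun ξ => w ξ t)) x := by
    simp [iteratedDeriv_succ, iteratedDeriv_one]
  rw [this, h1]
  exact (hasDerivAt_sec1 (diff_of_contDiff (sm10 hw) (by norm_num)) x t).deriv

lemma L_s3 (x t : ℝ) : iteratedDeriv 3 (fun ξ => w ξ t) x = w30 w (x, t) := by
  have h2 : iteratedDeriv 2 (fun ξ => w ξ t) = fun ξ => w20 w (ξ, t) :=
    funext fun ξ => L_s2 hw ξ t
  rw [iteratedDeriv_succ, h2]
  exact (hasDerivAt_sec1 (diff_of_contDiff (sm20 hw) (by norm_num)) x t).deriv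

lemma L_s4 (x t : ℝ) : iteratedDeriv 4 (fun ξ => w ξ t) x = w40 w (x, t) := by
  have h3 : iteratedDeriv 3 (fun ξ => w ξ t) = fun ξ => w30 w (ξ, t) :=
    funext fun ξ => L_s3 hw ξ t
  rw [iteratedDeriv_succ, h3]
  exact (hasDerivAt_sec1 (diff_of_contDiff (sm30 hw) (by norm_num)) x t).deriv

lemma L_t1 (x t : ℝ) : deriv (fun τ => w x τ) t = w01 w (x, t) := (hasD_t01 hw x t).deriv

lemma L_t2 (x t : ℝ) : iteratedDeriv 2 (fun τ => w x τ) t = w02 w (x, t) := by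
  have h1 : deriv (fun τ => w x τ) = fun τ => w01 w (x, τ) := funext fun τ => L_t1 hw x τ
  have : iteratedDeriv 2 (fun τ => w x τ) t = deriv (deriv (fun τ => w x τ)) t := by
    simp [iteratedDeriv_succ, iteratedDeriv_one]
  rw [this, h1]
  exact (hasDerivAt_sec2 (diff_of_contDiff (sm01 hw) (by norm_num)) x t).deriv

lemma L_m1 (p : ℝ × ℝ) : w11 w p = u11 w p :=
  pd_comm (hw.of_le (by exact_mod_cast (by norm_num : (2:ℕ) ≤ 4))) p e2 e1

lemma L_m2 (p : ℝ × ℝ) : w21 w p = u21 w p := by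
  have h1 : w21 w p = pd e1 (w11 w) p :=
    pd_comm ((sm10 hw).of_le (by exact_mod_cast (by norm_num : (2:ℕ) ≤ 3))) p e2 e1
  rw [h1]
  have h2 : w11 w = u11 w := funext fun q => L_m1 hw q
  rw [h2]
  rfl

end W

lemma cs_sq {f : ℝ → ℝ} (hf : Continuous f) :
    (∫ x in (0:ℝ)..1, f x) ^ 2 ≤ ∫ x in (0:ℝ)..1, (f x) ^ 2 := by
  set c := ∫ x in (0:ℝ)..1, f x with hc
  have h1 : (0:ℝ) ≤ ∫ x in (0:ℝ)..1, (f x - c) ^ 2 :=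
    intervalIntegral.integral_nonneg (by norm_num) (fun x _ => sq_nonneg _)
  have h2 : ∫ x in (0:ℝ)..1, (f x - c) ^ 2
      = (∫ x in (0:ℝ)..1, (f x) ^ 2) - 2 * c * c + c ^ 2 := by
    have e : (fun x => (f x - c) ^ 2)
        = fun x => ((f x) ^ 2 - 2 * c * f x) + c ^ 2 := by
      funext x; ring
    rw [e, intervalIntegral.integral_add, intervalIntegral.integral_sub,
      intervalIntegral.integral_const_mul, intervalIntegral.integral_const]
    · rw [← hc]; simp [smul_eq_mul]
    · exact (hf.pow 2).intervalIntegrable 0 1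
    · exact (continuous_const.mul hf).intervalIntegrable 0 1
    · exact ((hf.pow 2).sub (continuous_const.mul hf)).intervalIntegrable 0 1
    · exact intervalIntegrable_const
  nlinarith [h1, h2]

end EBAux

namespace EBAux

lemma contSec1 {f : ℝ × ℝ → ℝ} (hf : Continuous f) (t : ℝ) :
    Continuous fun x => f (x, t) := hf.comp (continuous_id.prodMk continuous_const)

lemma contSec2 {f : ℝ × ℝ → ℝ} (hf : Continuous f) (x : ℝ) :
    Continuous fun τ => f (x, τ) := hf.comp (continuous_const.prodMk continuous_id)

end EBAux

open EBAux


/-- Admissibility estimate for the Euler–Bernoulli beam: under the boundary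
conditions `w(0,t) = wₓ(0,t) = wₓₓ(1,t) = wₓₓₓ(1,t) = 0`, the boundary trace of
the slope satisfies `∫₀ᵀ wₓ(1,t)² dt ≤ (3T + 2) F(0)` for every `T > 0`. -/
theorem euler_bernoulli_admissibility_estimate
    (w : ℝ → ℝ → ℝ)
    (hw : ContDiff ℝ 4 (fun p : ℝ × ℝ => w p.1 p.2))
    (heq : ∀ x ∈ Set.Icc (0:ℝ) 1, ∀ t ≥ (0:ℝ),
      iteratedDeriv 2 (fun τ => w x τ) t + iteratedDeriv 4 (fun ξ => w ξ t) x = 0)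
    (hbc : ∀ t ≥ (0:ℝ),
      w 0 t = 0 ∧ deriv (fun ξ => w ξ t) 0 = 0 ∧
      iteratedDeriv 2 (fun ξ => w ξ t) 1 = 0 ∧
      iteratedDeriv 3 (fun ξ => w ξ t) 1 = 0)
    (F : ℝ → ℝ)
    (hF : ∀ t, F t = (1/2) * ∫ x in (0:ℝ)..1,
      (deriv (fun τ => w x τ) t) ^ 2 + (iteratedDeriv 2 (fun ξ => w ξ t) x) ^ 2) :
    ∀ T > (0:ℝ),
      (∫ t in (0:ℝ)..T, (deriv (fun ξ => w ξ t) 1) ^ 2) ≤ (3 * T + 2) * F 0 := by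
  intro T hT
  have hwu : ContDiff ℝ ((4 : ℕ) : WithTop ℕ∞) (unc w) := by exact_mod_cast hw
  have huIcc : Set.uIcc (0:ℝ) 1 = Set.Icc 0 1 := Set.uIcc_of_le (by norm_num)
  -- boundary conditions in pd form
  have hb20 : ∀ t ≥ (0:ℝ), w20 w (1, t) = 0 := fun t ht => by
    rw [← L_s2 hwu]; exact (hbc t ht).2.2.1
  have hb30 : ∀ t ≥ (0:ℝ), w30 w (1, t) = 0 := fun t ht => by
    rw [← L_s3 hwu]; exact (hbc t ht).2.2.2
  have hb10 : ∀ t ≥ (0:ℝ), w10 w (0, t) = 0 := fun t ht => by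
    rw [← L_s1 hwu]; exact (hbc t ht).2.1
  have hb01 : ∀ t > (0:ℝ), w01 w (0, t) = 0 := by
    intro t ht
    have hev : (fun τ => w 0 τ) =ᶠ[nhds t] (fun _ => (0:ℝ)) := by
      filter_upwards [Ioi_mem_nhds ht] with τ hτ
      exact (hbc τ (le_of_lt hτ)).1
    rw [← L_t1 hwu, hev.deriv_eq]
    simp
  have hbu11 : ∀ t > (0:ℝ), u11 w (0, t) = 0 := by
    intro t ht
    rw [← L_m1 hwu]
    have hd := hasDerivAt_sec2 (diff_of_contDiff (sm10 hwu) (by norm_num)) 0 t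
    have hev : (fun τ => w10 w (0, τ)) =ᶠ[nhds t] (fun _ => (0:ℝ)) := by
      filter_upwards [Ioi_mem_nhds ht] with τ hτ
      exact hb10 τ (le_of_lt hτ)
    have : w11 w (0, t) = deriv (fun τ => w10 w (0, τ)) t := hd.deriv.symm
    rw [this, hev.deriv_eq]
    simp
  -- the PDE in pd form
  have hpde : ∀ x ∈ Set.Icc (0:ℝ) 1, ∀ t ≥ (0:ℝ), w02 w (x, t) = - w40 w (x, t) := by
    intro x hx t ht
    have h := heq x hx t ht
    rw [L_t2 hwu, L_s4 hwu] at h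
    linarith
  -- the energy as an integral of pd's
  set Φ : ℝ → ℝ := fun t => ∫ x in (0:ℝ)..1, ((w01 w (x, t)) ^ 2 + (w20 w (x, t)) ^ 2)
    with hΦdef
  have hFΦ : ∀ t, F t = (1/2) * Φ t := by
    intro t
    rw [hF t]
    have hrfl : Φ t = ∫ x in (0:ℝ)..1, ((w01 w (x, t)) ^ 2 + (w20 w (x, t)) ^ 2) := rfl
    rw [hrfl]
    congr 1
    apply intervalIntegral.integral_congr
    intro x _
    simp only [L_t1 hwu, L_s2 hwu]
  -- derivative of the energy
  set Φd : ℝ → ℝ := fun t => ∫ x in (0:ℝ)..1,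
      (2 * w01 w (x, t) * w02 w (x, t) + 2 * w20 w (x, t) * w21 w (x, t)) with hΦddef
  have hcontφ : Continuous (fun p : ℝ × ℝ =>
      2 * w01 w p * w02 w p + 2 * w20 w p * w21 w p) :=
    ((continuous_const.mul (sm01 hwu).continuous).mul (sm02 hwu).continuous).add
      ((continuous_const.mul (sm20 hwu).continuous).mul (sm21 hwu).continuous)
  have hΦ' : ∀ t₀ : ℝ, HasDerivAt Φ (Φd t₀) t₀ := by
    intro t₀
    obtain ⟨C, hC⟩ := (isCompact_Icc.prod (isCompact_closedBall t₀ 1)).exists_bound_of_continuousOn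
      (f := fun p : ℝ × ℝ => 2 * w01 w p * w02 w p + 2 * w20 w p * w21 w p)
      hcontφ.continuousOn
    have key := intervalIntegral.hasDerivAt_integral_of_dominated_loc_of_deriv_le
      (F := fun τ x => (w01 w (x, τ)) ^ 2 + (w20 w (x, τ)) ^ 2)
      (F' := fun τ x => 2 * w01 w (x, τ) * w02 w (x, τ) + 2 * w20 w (x, τ) * w21 w (x, τ))
      (x₀ := t₀) (a := (0:ℝ)) (b := 1) (μ := volume) (bound := fun _ => C) (s := Metric.ball t₀ 1)
      (Metric.ball_mem_nhds t₀ one_pos)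
      (Filter.Eventually.of_forall fun τ =>
        (((contSec1 (sm01 hwu).continuous τ).pow 2).add
          ((contSec1 (sm20 hwu).continuous τ).pow 2)).aestronglyMeasurable)
      ((((contSec1 (sm01 hwu).continuous t₀).pow 2).add
          ((contSec1 (sm20 hwu).continuous t₀).pow 2)).intervalIntegrable 0 1)
      ((contSec1 hcontφ t₀).aestronglyMeasurable)
      (Filter.Eventually.of_forall fun x hx τ hτ => by
        have hxm : (x, τ) ∈ Set.Icc (0:ℝ) 1 ×ˢ Metric.closedBall t₀ 1 := by
          constructor
          · rw [Set.uIoc_of_le (by norm_num : (0:ℝ) ≤ 1)] at hx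
            exact ⟨le_of_lt hx.1, hx.2⟩
          · exact Metric.ball_subset_closedBall hτ
        exact hC (x, τ) hxm)
      (intervalIntegrable_const)
      (Filter.Eventually.of_forall fun x hx τ hτ => by
        have h1 := hasDerivAt_sec2 (diff_of_contDiff (sm01 hwu) (by norm_num)) x τ
        have h2 := hasDerivAt_sec2 (diff_of_contDiff (sm20 hwu) (by norm_num)) x τ
        have h := (h1.pow 2).add (h2.pow 2)
        convert h using 1
        · rfl
        push_cast
        simp only [w02, w21, e2]
        ring)
    exact key.2
  -- Φd vanishes for t > 0
  have hΦd0 : ∀ t > (0:ℝ), Φd t = 0 := by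
    intro t ht
    have ht0 : (0:ℝ) ≤ t := le_of_lt ht
    have hcontA : Continuous fun x => w30 w (x, t) * u11 w (x, t) + w20 w (x, t) * u21 w (x, t) :=
      ((contSec1 (sm30 hwu).continuous t).mul (contSec1 (smu11 hwu).continuous t)).add
        ((contSec1 (sm20 hwu).continuous t).mul (contSec1 (smu21 hwu).continuous t))
    have hcontB : Continuous fun x => w40 w (x, t) * w01 w (x, t) + w30 w (x, t) * u11 w (x, t) :=
      ((contSec1 (sm40 hwu).continuous t).mul (contSec1 (sm01 hwu).continuous t)).add
        ((contSec1 (sm30 hwu).continuous t).mul (contSec1 (smu11 hwu).continuous t))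
    have hI1 : (∫ x in (0:ℝ)..1,
        (w30 w (x, t) * u11 w (x, t) + w20 w (x, t) * u21 w (x, t)))
        = w20 w (1, t) * u11 w (1, t) - w20 w (0, t) * u11 w (0, t) := by
      have h := intervalIntegral.integral_eq_sub_of_hasDerivAt
        (f := fun x => w20 w (x, t) * u11 w (x, t))
        (f' := fun x => w30 w (x, t) * u11 w (x, t) + w20 w (x, t) * u21 w (x, t))
        (a := (0:ℝ)) (b := 1)
        (fun x _ => (hasDerivAt_sec1 (diff_of_contDiff (sm20 hwu) (by norm_num)) x t).mul
          (hasDerivAt_sec1 (diff_of_contDiff (smu11 hwu) (by norm_num)) x t))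
        (hcontA.intervalIntegrable 0 1)
      exact h
    have hI2 : (∫ x in (0:ℝ)..1,
        (w40 w (x, t) * w01 w (x, t) + w30 w (x, t) * u11 w (x, t)))
        = w30 w (1, t) * w01 w (1, t) - w30 w (0, t) * w01 w (0, t) := by
      have h := intervalIntegral.integral_eq_sub_of_hasDerivAt
        (f := fun x => w30 w (x, t) * w01 w (x, t))
        (f' := fun x => w40 w (x, t) * w01 w (x, t) + w30 w (x, t) * u11 w (x, t))
        (a := (0:ℝ)) (b := 1)
        (fun x _ => (hasDerivAt_sec1 (diff_of_contDiff (sm30 hwu) (by norm_num)) x t).mul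
          (hasDerivAt_sec1 (diff_of_contDiff (sm01 hwu) (by norm_num)) x t))
        (hcontB.intervalIntegrable 0 1)
      exact h
    have hcongr : Set.EqOn
        (fun x => 2 * w01 w (x, t) * w02 w (x, t) + 2 * w20 w (x, t) * w21 w (x, t))
        (fun x => 2 * ((w30 w (x, t) * u11 w (x, t) + w20 w (x, t) * u21 w (x, t))
          - (w40 w (x, t) * w01 w (x, t) + w30 w (x, t) * u11 w (x, t))))
        (Set.uIcc (0:ℝ) 1) := by
      intro x hx
      rw [huIcc] at hx
      have hp := hpde x hx t ht0
      have hm := L_m2 hwu (x, t)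
      simp only
      rw [hm, hp]
      ring
    have : Φd t = 2 * ((∫ x in (0:ℝ)..1,
        (w30 w (x, t) * u11 w (x, t) + w20 w (x, t) * u21 w (x, t)))
        - (∫ x in (0:ℝ)..1,
        (w40 w (x, t) * w01 w (x, t) + w30 w (x, t) * u11 w (x, t)))) := by
      show (∫ x in (0:ℝ)..1,
        (2 * w01 w (x, t) * w02 w (x, t) + 2 * w20 w (x, t) * w21 w (x, t))) = _
      rw [intervalIntegral.integral_congr hcongr, intervalIntegral.integral_const_mul,
        intervalIntegral.integral_sub (hcontA.intervalIntegrable 0 1)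
          (hcontB.intervalIntegrable 0 1)]
    rw [this, hI1, hI2, hb20 t ht0, hb30 t ht0, hb01 t ht, hbu11 t ht]
    ring
  -- energy conservation
  have hΦconst : ∀ t ≥ (0:ℝ), Φ t = Φ 0 := by
    intro t ht
    rcases eq_or_lt_of_le ht with h | h
    · rw [← h]
    · have key : (∫ τ in (0:ℝ)..t, (0:ℝ)) = Φ t - Φ 0 := by
        apply intervalIntegral.integral_eq_sub_of_hasDeriv_right_of_le (le_of_lt h)
        · exact fun τ _ => (hΦ' τ).continuousAt.continuousWithinAt
        · intro τ hτ
          have h0 : Φd τ = 0 := hΦd0 τ hτ.1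
          have hh := hΦ' τ
          rw [h0] at hh
          exact hh.hasDerivWithinAt
        · exact intervalIntegrable_const
      simp at key
      linarith
  -- trace bound: (w10 w (1,t))^2 ≤ Φ t for t ≥ 0
  have htrace : ∀ t ≥ (0:ℝ), (w10 w (1, t)) ^ 2 ≤ Φ t := by
    intro t ht
    have hftc : (∫ x in (0:ℝ)..1, w20 w (x, t)) = w10 w (1, t) := by
      have := intervalIntegral.integral_eq_sub_of_hasDerivAt
        (f := fun x => w10 w (x, t)) (f' := fun x => w20 w (x, t))
        (fun x _ => hasDerivAt_sec1 (diff_of_contDiff (sm10 hwu) (by norm_num)) x t)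
        ((contSec1 (sm20 hwu).continuous t).intervalIntegrable 0 1)
      have h2 : w10 w (1, t) - w10 w (0, t) = w10 w (1, t) := by
        rw [hb10 t ht]; ring
      rw [this]
      exact h2
    have hcs : (w10 w (1, t)) ^ 2 ≤ ∫ x in (0:ℝ)..1, (w20 w (x, t)) ^ 2 := by
      rw [← hftc]
      exact cs_sq (contSec1 (sm20 hwu).continuous t)
    have hmono : (∫ x in (0:ℝ)..1, (w20 w (x, t)) ^ 2) ≤ Φ t := by
      show _ ≤ ∫ x in (0:ℝ)..1, ((w01 w (x, t)) ^ 2 + (w20 w (x, t)) ^ 2)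
      apply intervalIntegral.integral_mono_on (by norm_num)
        (((contSec1 (sm20 hwu).continuous t).pow 2).intervalIntegrable 0 1)
        ((((contSec1 (sm01 hwu).continuous t).pow 2).add
          ((contSec1 (sm20 hwu).continuous t).pow 2)).intervalIntegrable 0 1)
      intro x _
      simp only [Pi.add_apply, Pi.pow_apply]
      nlinarith [sq_nonneg (w01 w (x, t))]
    linarith
  -- F 0 is nonnegative
  have hF0 : 0 ≤ F 0 := by
    rw [hF 0]
    have : (0:ℝ) ≤ ∫ x in (0:ℝ)..1,
        ((deriv (fun τ => w x τ) 0) ^ 2 + (iteratedDeriv 2 (fun ξ => w ξ 0) x) ^ 2) :=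
      intervalIntegral.integral_nonneg (by norm_num)
        (fun x _ => by positivity)
    linarith
  -- conclusion
  have hΦ02F : Φ 0 = 2 * F 0 := by rw [hFΦ 0]; ring
  have hmain : (∫ t in (0:ℝ)..T, (deriv (fun ξ => w ξ t) 1) ^ 2)
      ≤ ∫ t in (0:ℝ)..T, 2 * F 0 := by
    have hcongr2 : Set.EqOn (fun t => (deriv (fun ξ => w ξ t) 1) ^ 2)
        (fun t => (w10 w (1, t)) ^ 2) (Set.uIcc 0 T) := by
      intro t _
      simp only [L_s1 hwu]
    rw [intervalIntegral.integral_congr hcongr2]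
    apply intervalIntegral.integral_mono_on (le_of_lt hT)
      (((contSec2 (sm10 hwu).continuous 1).pow 2).intervalIntegrable 0 T)
      intervalIntegrable_const
    intro t htT
    calc (w10 w (1, t)) ^ 2 ≤ Φ t := htrace t htT.1
      _ = Φ 0 := hΦconst t htT.1
      _ = 2 * F 0 := hΦ02F
  have : (∫ t in (0:ℝ)..T, 2 * F 0) = T * (2 * F 0) := by
    rw [intervalIntegral.integral_const]
    simp [smul_eq_mul]
  rw [this] at hmain
  nlinarith [mul_nonneg (by linarith : (0:ℝ) ≤ T + 2) hF0]
end
end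

section
/- Fix T > 0 and M ≥ 0. If in addition the solution starts from rest, i.e. w(x,0) = 0 and ∂ₜw(x,0) = 0 for all x ∈ [0,1], and its energy satisfies F(t) ≤ M for all t ∈ [0,T], then ∫₀ᵀ (∂ₓw(1,t))² dt ≤ (1 + 3T) M. -/
open Real MeasureTheory intervalIntegral

/-- Cauchy–Schwarz on `[0,1]` for a continuous function. -/
lemma sq_integral_le_integral_sq_aux (g : ℝ → ℝ) (hg : Continuous g) :
    (∫ x in (0:ℝ)..1, g x) ^ 2 ≤ ∫ x in (0:ℝ)..1, (g x) ^ 2 := by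
  set I : ℝ := ∫ x in (0:ℝ)..1, g x with hI
  have h1 : IntervalIntegrable g volume 0 1 := hg.intervalIntegrable 0 1
  have h2 : IntervalIntegrable (fun x => (g x) ^ 2) volume 0 1 :=
    (hg.pow 2).intervalIntegrable 0 1
  have hnn : (0:ℝ) ≤ ∫ x in (0:ℝ)..1, (g x - I) ^ 2 := by
    apply intervalIntegral.integral_nonneg (by norm_num)
    intro x _; positivity
  have hexp : (∫ x in (0:ℝ)..1, (g x - I) ^ 2)
      = (∫ x in (0:ℝ)..1, (g x) ^ 2) - I ^ 2 := by
    have : (fun x => (g x - I) ^ 2)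
        = fun x => (g x) ^ 2 - (2 * I) * g x + I ^ 2 := by
      funext x; ring
    rw [this]
    rw [intervalIntegral.integral_add ((h2.sub (h1.const_mul (2 * I)))) ((intervalIntegrable_const)),
      intervalIntegral.integral_sub h2 (h1.const_mul (2 * I)),
      intervalIntegral.integral_const_mul, intervalIntegral.integral_const, ← hI]
    simp [smul_eq_mul]
    ring
  linarith

/-- Well-posedness estimate for the controlled Euler–Bernoulli beam: if the
solution starts from rest (`w(x,0) = wₜ(x,0) = 0`) and its energy satisfies
`F(t) ≤ M` on `[0,T]`, then `∫₀ᵀ wₓ(1,t)² dt ≤ (1 + 3T) M`. -/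
theorem euler_bernoulli_wellposed_estimate
    (w : ℝ → ℝ → ℝ) (T M : ℝ) (hT : 0 < T) (hM : 0 ≤ M)
    (hw : ContDiff ℝ 4 (fun p : ℝ × ℝ => w p.1 p.2))
    (heq : ∀ x ∈ Set.Icc (0:ℝ) 1, ∀ t ≥ (0:ℝ),
      iteratedDeriv 2 (fun τ => w x τ) t + iteratedDeriv 4 (fun ξ => w ξ t) x = 0)
    (hbc : ∀ t ≥ (0:ℝ),
      w 0 t = 0 ∧ deriv (fun ξ => w ξ t) 0 = 0 ∧
      iteratedDeriv 2 (fun ξ => w ξ t) 1 = 0)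
    (hinit : ∀ x ∈ Set.Icc (0:ℝ) 1, w x 0 = 0 ∧ deriv (fun τ => w x τ) 0 = 0)
    (F : ℝ → ℝ)
    (hF : ∀ t, F t = (1/2) * ∫ x in (0:ℝ)..1,
      (deriv (fun τ => w x τ) t) ^ 2 + (iteratedDeriv 2 (fun ξ => w ξ t) x) ^ 2)
    (hFM : ∀ t ∈ Set.Icc (0:ℝ) T, F t ≤ M) :
    (∫ t in (0:ℝ)..T, (deriv (fun ξ => w ξ t) 1) ^ 2) ≤ (1 + 3 * T) * M := by
  set W : ℝ × ℝ → ℝ := fun p => w p.1 p.2 with hWdef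
  have hWdiff : Differentiable ℝ W := hw.differentiable (by norm_num)
  -- each slice in x is C⁴
  have hx4 : ∀ t : ℝ, ContDiff ℝ 4 (fun ξ => w ξ t) := by
    intro t
    exact hw.comp ((contDiff_id.prodMk contDiff_const))
  -- derivative in x as fderiv application
  have hderivx : ∀ (t x : ℝ),
      HasDerivAt (fun ξ => w ξ t) (fderiv ℝ W (x, t) (1, 0)) x := by
    intro t x
    have h1 : HasFDerivAt W (fderiv ℝ W (x, t)) (x, t) := (hWdiff (x, t)).hasFDerivAt
    have h2 : HasDerivAt (fun ξ : ℝ => (ξ, t)) ((1 : ℝ), (0 : ℝ)) x :=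
      HasDerivAt.prodMk (hasDerivAt_id x) (hasDerivAt_const x t)
    exact h1.comp_hasDerivAt x h2
  have hderivx' : ∀ (t x : ℝ), deriv (fun ξ => w ξ t) x = fderiv ℝ W (x, t) (1, 0) :=
    fun t x => (hderivx t x).deriv
  -- continuity of t ↦ deriv (fun ξ => w ξ t) 1
  have hrcont : Continuous (fun t => deriv (fun ξ => w ξ t) 1) := by
    have : Continuous (fun t : ℝ => fderiv ℝ W (1, t) ((1 : ℝ), (0 : ℝ))) := by
      exact ((hw.continuous_fderiv (by norm_num)).comp
        (continuous_const.prodMk continuous_id)).clm_apply continuous_const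
    simpa [hderivx'] using this
  -- pointwise bound on [0, T]
  have key : ∀ t ∈ Set.Icc (0:ℝ) T, (deriv (fun ξ => w ξ t) 1) ^ 2 ≤ 2 * M := by
    intro t ht
    have ht0 : (0:ℝ) ≤ t := ht.1
    have hf4 : ContDiff ℝ 4 (fun ξ => w ξ t) := hx4 t
    set f : ℝ → ℝ := fun ξ => w ξ t with hfdef
    have hfd : Differentiable ℝ f := hf4.differentiable (by norm_num)
    have hdC : ContDiff ℝ 3 (deriv f) := by
      have := (contDiff_succ_iff_deriv (n := 3)).mp (by exact_mod_cast hf4)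
      exact this.2.2
    have hg : Continuous (fun x => iteratedDeriv 2 f x) := by
      have h2 : Continuous (deriv (deriv f)) :=
        hdC.continuous_deriv (by norm_num)
      simpa [iteratedDeriv_succ, iteratedDeriv_one, iteratedDeriv_zero] using h2
    -- FTC: deriv f 1 = ∫₀¹ iteratedDeriv 2 f
    have hFTC : (∫ x in (0:ℝ)..1, iteratedDeriv 2 f x) = deriv f 1 - deriv f 0 := by
      apply intervalIntegral.integral_eq_sub_of_hasDerivAt
      · intro x _
        have hdd : Differentiable ℝ (deriv f) := hdC.differentiable (by norm_num)
        have := (hdd x).hasDerivAt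
        simpa [iteratedDeriv_succ, iteratedDeriv_one, iteratedDeriv_zero] using this
      · exact hg.intervalIntegrable 0 1
    have hbc0 : deriv f 0 = 0 := (hbc t ht0).2.1
    have hr : deriv f 1 = ∫ x in (0:ℝ)..1, iteratedDeriv 2 f x := by
      rw [hFTC, hbc0]; ring
    -- Cauchy–Schwarz
    have hCS : (deriv f 1) ^ 2 ≤ ∫ x in (0:ℝ)..1, (iteratedDeriv 2 f x) ^ 2 := by
      rw [hr]; exact sq_integral_le_integral_sq_aux _ hg
    -- compare with energy
    have htcont : Continuous (fun x => deriv (fun τ => w x τ) t) := by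
      have hderivt : ∀ x : ℝ, deriv (fun τ => w x τ) t = fderiv ℝ W (x, t) (0, 1) := by
        intro x
        have h1 : HasFDerivAt W (fderiv ℝ W (x, t)) (x, t) := (hWdiff (x, t)).hasFDerivAt
        have h2 : HasDerivAt (fun τ : ℝ => (x, τ)) ((0 : ℝ), (1 : ℝ)) t :=
          HasDerivAt.prodMk (hasDerivAt_const t x) (hasDerivAt_id t)
        exact (h1.comp_hasDerivAt t h2).deriv
      have : Continuous (fun x : ℝ => fderiv ℝ W (x, t) ((0 : ℝ), (1 : ℝ))) :=
        ((hw.continuous_fderiv (by norm_num)).comp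
          (continuous_id.prodMk continuous_const)).clm_apply continuous_const
      simpa [hderivt] using this
    have hmono : (∫ x in (0:ℝ)..1, (iteratedDeriv 2 f x) ^ 2)
        ≤ ∫ x in (0:ℝ)..1,
          (deriv (fun τ => w x τ) t) ^ 2 + (iteratedDeriv 2 (fun ξ => w ξ t) x) ^ 2 := by
      apply intervalIntegral.integral_mono_on (by norm_num)
        ((hg.pow 2).intervalIntegrable 0 1)
        (((htcont.pow 2).add (hg.pow 2)).intervalIntegrable 0 1)
      intro x _
      have : (0:ℝ) ≤ (deriv (fun τ => w x τ) t) ^ 2 := sq_nonneg _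
      simp only [hfdef, Pi.add_apply, Pi.pow_apply]
      linarith
    have hFt : F t ≤ M := hFM t ht
    rw [hF t] at hFt
    nlinarith [hCS, hmono]
  -- integrate the pointwise bound
  have hint : (∫ t in (0:ℝ)..T, (deriv (fun ξ => w ξ t) 1) ^ 2)
      ≤ ∫ t in (0:ℝ)..T, 2 * M := by
    apply intervalIntegral.integral_mono_on hT.le
      ((hrcont.pow 2).intervalIntegrable 0 T) intervalIntegrable_const
    exact key
  have : (∫ t in (0:ℝ)..T, (2 * M : ℝ)) = 2 * M * T := by
    simp
    ring
  rw [this] at hint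
  nlinarith
end

section
/- Fix t > 0 and define b = cosh t · cos t / (2t³(cosh²t + cos²t)) and d = −(cosh t · sin t + sinh t · cos t) / (2t³(cosh²t + cos²t)), and let f : ℝ → ℝ be given by f(x) = b·(cosh(tx)·sin(tx) − sinh(tx)·cos(tx)) + d·sinh(tx)·sin(tx). Then f satisfies the fourth-order boundary value problem f⁗(x) = −4t⁴ f(x) for all x (equivalently (2t²)² f + f⁗ = 0), together with f(0) = 0, f′(0) = 0, f″(1) = 0, and f‴(1) = 1. -/
open Real

/-- The Laplace-transformed Euler–Bernoulli beam solution
`f(x) = b(cosh(tx)sin(tx) − sinh(tx)cos(tx)) + d·sinh(tx)sin(tx)`, with the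
indicated coefficients `b, d`, satisfies `f⁗ = −4t⁴ f` together with the
boundary conditions `f(0) = f′(0) = f″(1) = 0` and `f‴(1) = 1`. -/
theorem beam_laplace_bvp_solution (t : ℝ) (ht : 0 < t)
    (b d : ℝ)
    (hb : b = cosh t * cos t / (2 * t ^ 3 * (cosh t ^ 2 + cos t ^ 2)))
    (hd : d = -(cosh t * sin t + sinh t * cos t) /
      (2 * t ^ 3 * (cosh t ^ 2 + cos t ^ 2)))
    (f : ℝ → ℝ)
    (hf : ∀ x, f x = b * (cosh (t * x) * sin (t * x) - sinh (t * x) * cos (t * x))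
      + d * sinh (t * x) * sin (t * x)) :
    (∀ x, iteratedDeriv 4 f x = -(4 * t ^ 4) * f x) ∧
    f 0 = 0 ∧ deriv f 0 = 0 ∧
    iteratedDeriv 2 f 1 = 0 ∧ iteratedDeriv 3 f 1 = 1 := by
  have hfe : f = fun x => b * (cosh (t * x) * sin (t * x) - sinh (t * x) * cos (t * x))
      + d * sinh (t * x) * sin (t * x) := funext hf
  subst hfe
  have Hch : ∀ x : ℝ, HasDerivAt (fun y => Real.cosh (t * y)) (t * Real.sinh (t * x)) x := by
    intro x
    simpa [mul_comm, Function.comp_def] using (Real.hasDerivAt_cosh (t * x)).comp x ((hasDerivAt_id x).const_mul t)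
  have Hsh : ∀ x : ℝ, HasDerivAt (fun y => Real.sinh (t * y)) (t * Real.cosh (t * x)) x := by
    intro x
    simpa [mul_comm, Function.comp_def] using (Real.hasDerivAt_sinh (t * x)).comp x ((hasDerivAt_id x).const_mul t)
  have Hc : ∀ x : ℝ, HasDerivAt (fun y => Real.cos (t * y)) (-(t * Real.sin (t * x))) x := by
    intro x
    have := (Real.hasDerivAt_cos (t * x)).comp x ((hasDerivAt_id x).const_mul t)
    simpa [mul_comm, Function.comp_def] using this
  have Hs : ∀ x : ℝ, HasDerivAt (fun y => Real.sin (t * y)) (t * Real.cos (t * x)) x := by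
    intro x
    simpa [mul_comm, Function.comp_def] using (Real.hasDerivAt_sin (t * x)).comp x ((hasDerivAt_id x).const_mul t)
  set g1 : ℝ → ℝ := fun x => 2 * t * b * (sinh (t * x) * sin (t * x))
      + d * t * (cosh (t * x) * sin (t * x) + sinh (t * x) * cos (t * x)) with hg1
  set g2 : ℝ → ℝ := fun x => 2 * t ^ 2 * b * (cosh (t * x) * sin (t * x) + sinh (t * x) * cos (t * x))
      + 2 * t ^ 2 * d * (cosh (t * x) * cos (t * x)) with hg2
  set g3 : ℝ → ℝ := fun x => 4 * t ^ 3 * b * (cosh (t * x) * cos (t * x))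
      + 2 * t ^ 3 * d * (sinh (t * x) * cos (t * x) - cosh (t * x) * sin (t * x)) with hg3
  have D1 : ∀ x : ℝ, HasDerivAt (fun y => b * (cosh (t * y) * sin (t * y) - sinh (t * y) * cos (t * y))
      + d * sinh (t * y) * sin (t * y)) (g1 x) x := by
    intro x
    have h : HasDerivAt (_ : ℝ → ℝ) _ x := ((((Hch x).mul (Hs x)).sub ((Hsh x).mul (Hc x))).const_mul b).add
      ((((Hsh x).mul (Hs x))).const_mul d)
    convert h using 1
    · ext y; simp only [Pi.add_apply, Pi.mul_apply, Pi.sub_apply]; ring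
    · rw [hg1]; ring
  have D2 : ∀ x : ℝ, HasDerivAt g1 (g2 x) x := by
    intro x
    have h : HasDerivAt (_ : ℝ → ℝ) _ x := (((Hsh x).mul (Hs x)).const_mul (2 * t * b)).add
      ((((Hch x).mul (Hs x)).add ((Hsh x).mul (Hc x))).const_mul (d * t))
    convert h using 1
    · rfl
    rw [hg2]; ring
  have D3 : ∀ x : ℝ, HasDerivAt g2 (g3 x) x := by
    intro x
    have h : HasDerivAt (_ : ℝ → ℝ) _ x := ((((Hch x).mul (Hs x)).add ((Hsh x).mul (Hc x))).const_mul (2 * t ^ 2 * b)).add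
      (((Hch x).mul (Hc x)).const_mul (2 * t ^ 2 * d))
    convert h using 1
    · rfl
    rw [hg3]; ring
  have D4 : ∀ x : ℝ, HasDerivAt g3 (-(4 * t ^ 4) *
      (b * (cosh (t * x) * sin (t * x) - sinh (t * x) * cos (t * x))
      + d * sinh (t * x) * sin (t * x))) x := by
    intro x
    have h : HasDerivAt (_ : ℝ → ℝ) _ x := (((Hch x).mul (Hc x)).const_mul (4 * t ^ 3 * b)).add
      ((((Hsh x).mul (Hc x)).sub ((Hch x).mul (Hs x))).const_mul (2 * t ^ 3 * d))
    convert h using 1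
    · rfl
    ring
  have e1 : deriv (fun x => b * (cosh (t * x) * sin (t * x) - sinh (t * x) * cos (t * x))
      + d * sinh (t * x) * sin (t * x)) = g1 := funext fun x => (D1 x).deriv
  have e2 : iteratedDeriv 2 (fun x => b * (cosh (t * x) * sin (t * x) - sinh (t * x) * cos (t * x))
      + d * sinh (t * x) * sin (t * x)) = g2 := by
    rw [iteratedDeriv_succ, iteratedDeriv_one, e1]
    exact funext fun x => (D2 x).deriv
  have e3 : iteratedDeriv 3 (fun x => b * (cosh (t * x) * sin (t * x) - sinh (t * x) * cos (t * x))
      + d * sinh (t * x) * sin (t * x)) = g3 := by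
    rw [iteratedDeriv_succ, e2]
    exact funext fun x => (D3 x).deriv
  have ht' : t ≠ 0 := ne_of_gt ht
  have hΔ : cosh t ^ 2 + cos t ^ 2 ≠ 0 := by
    have := Real.one_le_cosh t
    positivity
  refine ⟨?_, ?_, ?_, ?_, ?_⟩
  · intro x
    rw [iteratedDeriv_succ, e3, (D4 x).deriv]
  · simp
  · rw [e1]; simp [hg1]
  · rw [e2]
    simp only [hg2, mul_one]
    rw [hb, hd]
    field_simp
    ring
  · rw [e3]
    simp only [hg3, mul_one]
    rw [hb, hd]
    have h1 := Real.cosh_sq_sub_sinh_sq t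
    have h2 := Real.sin_sq_add_cos_sq t
    field_simp
    linear_combination (2*cos t^2) * h1 + (2*cosh t^2) * h2
end

section
/- For every t > 0, | sinh t · cosh t · sin t · cos t − (cosh t · sin t + sinh t · cos t)² | / (2t²(cosh²t + cos²t)) ≤ 5 / (2t²). Equivalently, with s = 2t² and H(s) = −[ sinh t · cosh t · sin t · cos t − (cosh t · sin t + sinh t · cos t)² ] / (2t²(cosh²t + cos²t)), one has |H(s)| ≤ 5/s. -/
open Real

/-- Bound on the beam transfer function: for every `t > 0`,
`|sinh t cosh t sin t cos t − (cosh t sin t + sinh t cos t)²| /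
(2t²(cosh²t + cos²t)) ≤ 5/(2t²)`; equivalently `|H(s)| ≤ 5/s` with `s = 2t²`. -/
theorem beam_transfer_function_bound :
    ∀ t > (0:ℝ),
      |sinh t * cosh t * sin t * cos t - (cosh t * sin t + sinh t * cos t) ^ 2| /
          (2 * t ^ 2 * (cosh t ^ 2 + cos t ^ 2)) ≤ 5 / (2 * t ^ 2) ∧
      |-((sinh t * cosh t * sin t * cos t
            - (cosh t * sin t + sinh t * cos t) ^ 2) /
          (2 * t ^ 2 * (cosh t ^ 2 + cos t ^ 2)))| ≤ 5 / (2 * t ^ 2) := by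
  intro t ht
  have hc1 : (1:ℝ) ≤ cosh t := Real.one_le_cosh t
  have hsa : |sinh t| ≤ cosh t := by
    have := Real.cosh_sq t
    rw [abs_le]
    constructor <;> nlinarith [Real.cosh_pos t]
  have hsin : |sin t| ≤ 1 := Real.abs_sin_le_one t
  have hcos : |cos t| ≤ 1 := Real.abs_cos_le_one t
  have hs2 : sinh t ^ 2 ≤ cosh t ^ 2 := by nlinarith [abs_nonneg (sinh t), sq_abs (sinh t)]
  have hsin2 : sin t ^ 2 ≤ 1 := by nlinarith [sq_abs (sin t), abs_nonneg (sin t)]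
  have hcos2 : cos t ^ 2 ≤ 1 := by nlinarith [sq_abs (cos t), abs_nonneg (cos t)]
  have hcp : 0 < cosh t := Real.cosh_pos t
  have hprod : |sinh t * cosh t * sin t * cos t| ≤ cosh t ^ 2 := by
    have : |sinh t * cosh t * sin t * cos t| = |sinh t| * cosh t * |sin t| * |cos t| := by
      rw [abs_mul, abs_mul, abs_mul, abs_of_pos hcp]
    rw [this]
    calc |sinh t| * cosh t * |sin t| * |cos t|
        ≤ cosh t * cosh t * 1 * 1 := by
          gcongr <;> positivity
      _ = cosh t ^ 2 := by ring
  have hsq : (cosh t * sin t + sinh t * cos t) ^ 2 ≤ 4 * cosh t ^ 2 := by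
    nlinarith [sq_nonneg (cosh t * sin t - sinh t * cos t),
      mul_nonneg (sq_nonneg (cosh t)) (sub_nonneg.2 hsin2),
      mul_nonneg (sq_nonneg (sinh t)) (sub_nonneg.2 hcos2)]
  have hN : |sinh t * cosh t * sin t * cos t - (cosh t * sin t + sinh t * cos t) ^ 2|
      ≤ 5 * cosh t ^ 2 := by
    have := abs_le.1 hprod
    rw [abs_le]
    constructor <;> nlinarith [sq_nonneg (cosh t * sin t + sinh t * cos t)]
  have hD : 0 < 2 * t ^ 2 * (cosh t ^ 2 + cos t ^ 2) := by positivity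
  have ht2 : (0:ℝ) < 2 * t ^ 2 := by positivity
  have key : |sinh t * cosh t * sin t * cos t - (cosh t * sin t + sinh t * cos t) ^ 2| /
      (2 * t ^ 2 * (cosh t ^ 2 + cos t ^ 2)) ≤ 5 / (2 * t ^ 2) := by
    rw [div_le_div_iff₀ hD ht2]
    nlinarith [mul_le_mul_of_nonneg_right hN (le_of_lt ht2), sq_nonneg (cos t),
      mul_nonneg (le_of_lt ht2) (sq_nonneg (cos t))]
  refine ⟨key, ?_⟩
  rw [abs_neg, abs_div, abs_of_pos hD]
  exact key
end

section
/- The function t ↦ [ sinh t · cosh t · sin t · cos t − (cosh t · sin t + sinh t · cos t)² ] / (2t²(cosh²t + cos²t)) tends to 0 as t → +∞; consequently, the transfer function H(s) of the beam system with boundary control ∂ₓ³w(1,t) = u(t) and observation y(t) = ∂ₓw(1,t) tends to 0 as s = 2t² → +∞, which establishes regularity with feedthrough operator zero. -/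
open Real Filter

theorem aux_beam_tendsto :
    Tendsto (fun t : ℝ =>
        (sinh t * cosh t * sin t * cos t
          - (cosh t * sin t + sinh t * cos t) ^ 2) /
        (2 * t ^ 2 * (cosh t ^ 2 + cos t ^ 2))) atTop (nhds 0) := by
  have hb : Tendsto (fun t : ℝ => 5 / (2 * t ^ 2)) atTop (nhds 0) := by
    apply Tendsto.div_atTop tendsto_const_nhds
    exact (tendsto_pow_atTop two_ne_zero).const_mul_atTop two_pos
  apply squeeze_zero_norm' _ hb
  filter_upwards [eventually_ge_atTop (1 : ℝ)] with t ht
  have hc : (1 : ℝ) ≤ cosh t := one_le_cosh t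
  have hcnn : (0 : ℝ) ≤ cosh t := by linarith
  have hpyth : cosh t ^ 2 - sinh t ^ 2 = 1 := cosh_sq_sub_sinh_sq t
  have hs : |sinh t| ≤ cosh t := by
    rw [abs_le]; constructor <;> nlinarith
  have hden : (0 : ℝ) < 2 * t ^ 2 * (cosh t ^ 2 + cos t ^ 2) := by
    have h1 : (0:ℝ) < t ^ 2 := by positivity
    nlinarith [sq_nonneg (cos t)]
  have hb1 : |cosh t * sin t + sinh t * cos t| ≤ 2 * cosh t := by
    calc |cosh t * sin t + sinh t * cos t|
        ≤ |cosh t * sin t| + |sinh t * cos t| := abs_add_le _ _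
      _ = |cosh t| * |sin t| + |sinh t| * |cos t| := by rw [abs_mul, abs_mul]
      _ ≤ cosh t * 1 + cosh t * 1 := by
          refine add_le_add
            (mul_le_mul (le_of_eq (abs_of_nonneg hcnn)) (abs_sin_le_one t)
              (abs_nonneg _) hcnn)
            (mul_le_mul hs (abs_cos_le_one t) (abs_nonneg _) hcnn)
      _ = 2 * cosh t := by ring
  have hB : (cosh t * sin t + sinh t * cos t) ^ 2 ≤ 4 * cosh t ^ 2 := by
    have h2 := pow_le_pow_left₀ (abs_nonneg _) hb1 2
    rw [sq_abs] at h2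
    nlinarith [h2]
  have hA : |sinh t * cosh t * sin t * cos t| ≤ cosh t ^ 2 := by
    calc |sinh t * cosh t * sin t * cos t|
        = |sinh t| * |cosh t| * |sin t| * |cos t| := by
          rw [abs_mul, abs_mul, abs_mul]
      _ ≤ cosh t * cosh t * 1 * 1 := by
          refine mul_le_mul
            (mul_le_mul
              (mul_le_mul hs (le_of_eq (abs_of_nonneg hcnn)) (abs_nonneg _) hcnn)
              (abs_sin_le_one t) (abs_nonneg _) (by positivity))
            (abs_cos_le_one t) (abs_nonneg _) (by positivity)
      _ = cosh t ^ 2 := by ring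
  have hnum : |sinh t * cosh t * sin t * cos t
      - (cosh t * sin t + sinh t * cos t) ^ 2| ≤ 5 * cosh t ^ 2 := by
    calc |sinh t * cosh t * sin t * cos t
        - (cosh t * sin t + sinh t * cos t) ^ 2|
        ≤ |sinh t * cosh t * sin t * cos t|
          + |(cosh t * sin t + sinh t * cos t) ^ 2| := abs_sub _ _
      _ ≤ cosh t ^ 2 + 4 * cosh t ^ 2 := by
          have h3 : |(cosh t * sin t + sinh t * cos t) ^ 2|
              = (cosh t * sin t + sinh t * cos t) ^ 2 := abs_of_nonneg (sq_nonneg _)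
          rw [h3]; exact add_le_add hA hB
      _ = 5 * cosh t ^ 2 := by ring
  rw [Real.norm_eq_abs, abs_div, abs_of_pos hden,
    div_le_div_iff₀ hden (by positivity)]
  nlinarith [mul_le_mul_of_nonneg_right hnum
      (by positivity : (0:ℝ) ≤ 2 * t ^ 2),
    mul_nonneg (by positivity : (0:ℝ) ≤ 2 * t ^ 2) (sq_nonneg (cos t))]

/-- Regularity of the beam system: the quantity
`[sinh t cosh t sin t cos t − (cosh t sin t + sinh t cos t)²] /
(2t²(cosh²t + cos²t))` tends to `0` as `t → +∞`; consequently the transfer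
function `H(s)` (with `s = 2t²`, i.e. `t = √(s/2)`) tends to `0` as
`s → +∞`, so the feedthrough operator is zero. -/
theorem beam_transfer_function_tendsto_zero :
    Tendsto (fun t : ℝ =>
        (sinh t * cosh t * sin t * cos t
          - (cosh t * sin t + sinh t * cos t) ^ 2) /
        (2 * t ^ 2 * (cosh t ^ 2 + cos t ^ 2))) atTop (nhds 0) ∧
    Tendsto (fun s : ℝ =>
        -((sinh (Real.sqrt (s / 2)) * cosh (Real.sqrt (s / 2)) *
              sin (Real.sqrt (s / 2)) * cos (Real.sqrt (s / 2))
            - (cosh (Real.sqrt (s / 2)) * sin (Real.sqrt (s / 2))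
                + sinh (Real.sqrt (s / 2)) * cos (Real.sqrt (s / 2))) ^ 2) /
          (2 * Real.sqrt (s / 2) ^ 2 *
            (cosh (Real.sqrt (s / 2)) ^ 2 + cos (Real.sqrt (s / 2)) ^ 2))))
      atTop (nhds 0) := by
  have h1 := aux_beam_tendsto
  refine ⟨h1, ?_⟩
  have hsq : Tendsto (fun s : ℝ => Real.sqrt (s / 2)) atTop atTop := by
    rw [tendsto_atTop_atTop]
    intro b
    refine ⟨2 * b ^ 2 + 2, fun a ha => ?_⟩
    have h2 : b ^ 2 ≤ a / 2 := by nlinarith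
    calc b ≤ |b| := le_abs_self b
      _ = Real.sqrt (b ^ 2) := (Real.sqrt_sq_eq_abs b).symm
      _ ≤ Real.sqrt (a / 2) := Real.sqrt_le_sqrt h2
  have := (h1.comp hsq).neg
  simpa using this
end

section
/- For every t > 0, | cosh t · sin t + sinh t · cos t | / (t(cosh²t + cos²t)) ≤ 2 / (t · cosh t), and this quantity tends to 0 as t → +∞; consequently the transfer function H₁(s) = −(cosh t · sin t + sinh t · cos t)/(t(cosh²t + cos²t)), s = 2t², of the beam system with boundary observation y(t) = ∂ₓ²w(0,t) tends to 0 as s → +∞, which establishes regularity with feedthrough operator zero. -/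
open Real Filter

private lemma beam_num_bound (t : ℝ) :
    |cosh t * sin t + sinh t * cos t| ≤ 2 * cosh t := by
  have h1 : |cosh t * sin t| ≤ cosh t := by
    rw [abs_mul, abs_of_pos (cosh_pos (x := t))]
    nlinarith [abs_sin_le_one t, cosh_pos (x := t), abs_nonneg (sin t)]
  have h2 : |sinh t * cos t| ≤ cosh t := by
    rw [abs_mul]
    have hs : |sinh t| ≤ cosh t := by
      have := Real.cosh_sq t
      have h := abs_nonneg (sinh t)
      nlinarith [sq_abs (sinh t), cosh_pos (x := t)]
    nlinarith [abs_cos_le_one t, abs_nonneg (sinh t), cosh_pos (x := t)]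
  calc |cosh t * sin t + sinh t * cos t| ≤ |cosh t * sin t| + |sinh t * cos t| :=
        abs_add_le _ _
    _ ≤ 2 * cosh t := by linarith

private lemma beam_bound : ∀ t > (0:ℝ),
    |cosh t * sin t + sinh t * cos t| / (t * (cosh t ^ 2 + cos t ^ 2)) ≤
      2 / (t * cosh t) := by
  intro t ht
  have hc := cosh_pos (x := t)
  have hd : (0:ℝ) < t * (cosh t ^ 2) := by positivity
  have : |cosh t * sin t + sinh t * cos t| / (t * (cosh t ^ 2 + cos t ^ 2)) ≤
      (2 * cosh t) / (t * cosh t ^ 2) := by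
    apply div_le_div₀ (by positivity) (beam_num_bound t) hd
    nlinarith [sq_nonneg (cos t)]
  refine this.trans_eq ?_
  field_simp

/-- Bound and decay for the transfer function `H₁` of the beam system with
observation `y = wₓₓ(0,t)`: for every `t > 0`,
`|cosh t sin t + sinh t cos t| / (t(cosh²t + cos²t)) ≤ 2/(t cosh t)`, this
quantity tends to `0` as `t → +∞`, and consequently
`H₁(s) = −(cosh t sin t + sinh t cos t)/(t(cosh²t + cos²t))` (with
`t = √(s/2)`) tends to `0` as `s → +∞`. -/
theorem beam_second_transfer_function_bound_and_decay :
    (∀ t > (0:ℝ),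
      |cosh t * sin t + sinh t * cos t| / (t * (cosh t ^ 2 + cos t ^ 2)) ≤
        2 / (t * cosh t)) ∧
    Tendsto (fun t : ℝ =>
        |cosh t * sin t + sinh t * cos t| / (t * (cosh t ^ 2 + cos t ^ 2)))
      atTop (nhds 0) ∧
    Tendsto (fun s : ℝ =>
        -(cosh (Real.sqrt (s / 2)) * sin (Real.sqrt (s / 2))
            + sinh (Real.sqrt (s / 2)) * cos (Real.sqrt (s / 2))) /
          (Real.sqrt (s / 2) *
            (cosh (Real.sqrt (s / 2)) ^ 2 + cos (Real.sqrt (s / 2)) ^ 2)))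
      atTop (nhds 0) := by
  have hbnd := beam_bound
  have hmaj : Tendsto (fun t : ℝ => 2 / (t * cosh t)) atTop (nhds 0) := by
    apply Tendsto.div_atTop tendsto_const_nhds
    have hcosh : Tendsto Real.cosh atTop atTop := by
      apply tendsto_atTop_mono (fun t => ?_) (Real.tendsto_exp_atTop.atTop_div_const two_pos)
      rw [Real.cosh_eq]
      have := Real.exp_pos (-t)
      linarith
    exact tendsto_id.atTop_mul_atTop₀ hcosh
  have hdec : Tendsto (fun t : ℝ =>
      |cosh t * sin t + sinh t * cos t| / (t * (cosh t ^ 2 + cos t ^ 2)))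
      atTop (nhds 0) := by
    apply squeeze_zero' ?_ ?_ hmaj
    · filter_upwards [eventually_gt_atTop (0:ℝ)] with t ht
      have hc := cosh_pos (x := t)
      positivity
    · filter_upwards [eventually_gt_atTop (0:ℝ)] with t ht
      exact hbnd t ht
  refine ⟨hbnd, hdec, ?_⟩
  have hsq0 : Tendsto Real.sqrt atTop atTop := by
    have := tendsto_rpow_atTop (by norm_num : (0:ℝ) < 1/2)
    exact this.congr' (Filter.Eventually.of_forall fun x => (Real.sqrt_eq_rpow x).symm)
  have hsqrt : Tendsto (fun s : ℝ => Real.sqrt (s / 2)) atTop atTop :=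
    hsq0.comp (tendsto_id.atTop_div_const two_pos)
  have hcomp := hdec.comp hsqrt
  apply squeeze_zero_norm' ?_ hcomp
  filter_upwards [eventually_gt_atTop (0:ℝ)] with s hs
  have ht : 0 < Real.sqrt (s / 2) := Real.sqrt_pos.2 (by linarith)
  set t := Real.sqrt (s / 2)
  have hc := cosh_pos (x := t)
  have hdpos : (0:ℝ) < t * (cosh t ^ 2 + cos t ^ 2) := by positivity
  rw [Real.norm_eq_abs, abs_div, abs_neg, abs_of_pos hdpos]
  exact le_of_eq rfl
end

section
/- For every t ≥ 0, the function ρ₁(t) = ∫₀¹ (x−1) ∂ₜw(x,t) ∂ₓw(x,t) dx is differentiable in t and satisfies ρ₁′(t) = ½ (∂ₓ²w(0,t))² − ½ ∫₀¹ [ (∂ₜw(x,t))² + 3(∂ₓ²w(x,t))² ] dx. -/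
open Real MeasureTheory intervalIntegral

noncomputable def px (F : ℝ × ℝ → ℝ) : ℝ × ℝ → ℝ := fun p => deriv (fun a => F (a, p.2)) p.1
noncomputable def pt (F : ℝ × ℝ → ℝ) : ℝ × ℝ → ℝ := fun p => deriv (fun b => F (p.1, b)) p.2

lemma hasDerivAt_slice_x {F : ℝ × ℝ → ℝ} {a b : ℝ} (hF : DifferentiableAt ℝ F (a, b)) :
    HasDerivAt (fun x => F (x, b)) (px F (a, b)) a := by
  have h := hF.hasFDerivAt.comp_hasDerivAt a ((hasDerivAt_id a).prodMk (hasDerivAt_const a b))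
  have e2 : px F (a, b) = (fderiv ℝ F (a, b)) (1, 0) := h.deriv
  rw [e2]; exact h

lemma hasDerivAt_slice_t {F : ℝ × ℝ → ℝ} {a b : ℝ} (hF : DifferentiableAt ℝ F (a, b)) :
    HasDerivAt (fun y => F (a, y)) (pt F (a, b)) b := by
  have h := hF.hasFDerivAt.comp_hasDerivAt b ((hasDerivAt_const b a).prodMk (hasDerivAt_id b))
  have e2 : pt F (a, b) = (fderiv ℝ F (a, b)) (0, 1) := h.deriv
  rw [e2]; exact h

lemma px_eq {F : ℝ × ℝ → ℝ} {p : ℝ × ℝ} (hF : DifferentiableAt ℝ F p) :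
    px F p = fderiv ℝ F p (1, 0) := by
  obtain ⟨a, b⟩ := p
  exact (hF.hasFDerivAt.comp_hasDerivAt a ((hasDerivAt_id a).prodMk (hasDerivAt_const a b))).deriv

lemma pt_eq {F : ℝ × ℝ → ℝ} {p : ℝ × ℝ} (hF : DifferentiableAt ℝ F p) :
    pt F p = fderiv ℝ F p (0, 1) := by
  obtain ⟨a, b⟩ := p
  exact (hF.hasFDerivAt.comp_hasDerivAt b ((hasDerivAt_const b a).prodMk (hasDerivAt_id b))).deriv

lemma contDiff_px {n : WithTop ℕ∞} {F : ℝ × ℝ → ℝ} (hF : ContDiff ℝ (n + 1) F) :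
    ContDiff ℝ n (px F) := by
  have hd : Differentiable ℝ F := hF.differentiable (by simp)
  have h2 : ContDiff ℝ n (fun p => fderiv ℝ F p (1, 0)) :=
    (hF.fderiv_right le_rfl).clm_apply contDiff_const
  have e : px F = fun p => fderiv ℝ F p (1, 0) := funext fun p => px_eq (hd p)
  rw [e]; exact h2

lemma contDiff_pt {n : WithTop ℕ∞} {F : ℝ × ℝ → ℝ} (hF : ContDiff ℝ (n + 1) F) :
    ContDiff ℝ n (pt F) := by
  have hd : Differentiable ℝ F := hF.differentiable (by simp)
  have h2 : ContDiff ℝ n (fun p => fderiv ℝ F p (0, 1)) :=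
    (hF.fderiv_right le_rfl).clm_apply contDiff_const
  have e : pt F = fun p => fderiv ℝ F p (0, 1) := funext fun p => pt_eq (hd p)
  rw [e]; exact h2
lemma pt_px_comm {F : ℝ × ℝ → ℝ} (hF : ContDiff ℝ 2 F) (p : ℝ × ℝ) :
    pt (px F) p = px (pt F) p := by
  have hd : Differentiable ℝ F := hF.differentiable (by norm_num)
  have hf' : Differentiable ℝ (fderiv ℝ F) :=
    (hF.fderiv_right (m := 1) (le_refl (2 : WithTop ℕ∞))).differentiable (by norm_num)
  have epx : px F = fun q => fderiv ℝ F q (1, 0) := funext fun q => px_eq (hd q)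
  have ept : pt F = fun q => fderiv ℝ F q (0, 1) := funext fun q => pt_eq (hd q)
  have hpx_diff : DifferentiableAt ℝ (px F) p := by
    rw [epx]; exact (hf' p).clm_apply (differentiableAt_const _)
  have hpt_diff : DifferentiableAt ℝ (pt F) p := by
    rw [ept]; exact (hf' p).clm_apply (differentiableAt_const _)
  have h1 : pt (px F) p = fderiv ℝ (px F) p (0, 1) := pt_eq hpx_diff
  have h2 : px (pt F) p = fderiv ℝ (pt F) p (1, 0) := px_eq hpt_diff
  rw [h1, h2, epx, ept, fderiv_clm_apply (hf' p) (differentiableAt_const _),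
    fderiv_clm_apply (hf' p) (differentiableAt_const _)]
  simp only [fderiv_const, fderiv_const_apply, Pi.zero_apply, ContinuousLinearMap.comp_zero,
    ContinuousLinearMap.zero_apply, zero_add, ContinuousLinearMap.add_apply,
    ContinuousLinearMap.flip_apply]
  exact second_derivative_symmetric (fun y => (hd y).hasFDerivAt) (hf' p).hasFDerivAt _ _
lemma ex1 (w : ℝ → ℝ → ℝ) (x τ : ℝ) :
    deriv (fun ξ => w ξ τ) x = px (fun p => w p.1 p.2) (x, τ) := rfl
lemma et1 (w : ℝ → ℝ → ℝ) (x τ : ℝ) :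
    deriv (fun s => w x s) τ = pt (fun p => w p.1 p.2) (x, τ) := rfl
lemma ex2 (w : ℝ → ℝ → ℝ) (x τ : ℝ) :
    iteratedDeriv 2 (fun ξ => w ξ τ) x = px (px (fun p => w p.1 p.2)) (x, τ) := by
  simp only [iteratedDeriv_succ, iteratedDeriv_zero]; rfl
lemma ex3 (w : ℝ → ℝ → ℝ) (x τ : ℝ) :
    iteratedDeriv 3 (fun ξ => w ξ τ) x = px (px (px (fun p => w p.1 p.2))) (x, τ) := by
  simp only [iteratedDeriv_succ, iteratedDeriv_zero]; rfl
lemma ex4 (w : ℝ → ℝ → ℝ) (x τ : ℝ) :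
    iteratedDeriv 4 (fun ξ => w ξ τ) x = px (px (px (px (fun p => w p.1 p.2)))) (x, τ) := by
  simp only [iteratedDeriv_succ, iteratedDeriv_zero]; rfl
lemma et2 (w : ℝ → ℝ → ℝ) (x τ : ℝ) :
    iteratedDeriv 2 (fun s => w x s) τ = pt (pt (fun p => w p.1 p.2)) (x, τ) := by
  simp only [iteratedDeriv_succ, iteratedDeriv_zero]; rfl
lemma ibp_aux (u1 u2 u3 u4 v v1 aa : ℝ → ℝ)
    (hu1 : ∀ x, HasDerivAt u1 (u2 x) x) (hu2 : ∀ x, HasDerivAt u2 (u3 x) x)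
    (hu3 : ∀ x, HasDerivAt u3 (u4 x) x) (hv : ∀ x, HasDerivAt v (v1 x) x)
    (hc1 : Continuous u1) (hc2 : Continuous u2) (hc3 : Continuous u3)
    (hc4 : Continuous u4) (hcv : Continuous v) (hcv1 : Continuous v1)
    (hcaa : Continuous aa)
    (hpde : ∀ x ∈ Set.Icc (0:ℝ) 1, aa x = - u4 x)
    (hu10 : u1 0 = 0) (hu21 : u2 1 = 0) (hv0 : v 0 = 0) :
    (∫ x in (0:ℝ)..1, ((x - 1) * aa x * u1 x + (x - 1) * v x * v1 x))
      = (1/2) * (u2 0)^2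
        - (1/2) * (∫ x in (0:ℝ)..1, ((v x)^2 + 3 * (u2 x)^2)) := by
  have hI : ∀ f : ℝ → ℝ, Continuous f → IntervalIntegrable f volume 0 1 :=
    fun f hf => hf.intervalIntegrable 0 1
  have hid : Continuous fun x : ℝ => x - 1 := continuous_id.sub continuous_const
  -- B part : ∫ (x-1) v v1 = -(1/2) ∫ v²
  have hB := integral_mul_deriv_eq_deriv_mul (a := 0) (b := 1)
    (fun x _ => ((hasDerivAt_id x).sub_const 1).mul (hv x)) (fun x _ => hv x)
    (hI _ ((continuous_const.mul hcv).add (hid.mul hcv1))) (hI _ hcv1)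
  simp only [id_eq] at hB
  have hBs : (∫ x in (0:ℝ)..1, (1 * v x + (x - 1) * v1 x) * v x)
      = (∫ x in (0:ℝ)..1, v x ^ 2) + ∫ x in (0:ℝ)..1, (x - 1) * v x * v1 x := by
    rw [← integral_add (hI (fun x => v x ^ 2) (hcv.pow 2)) (hI (fun x => (x - 1) * v x * v1 x) ((hid.mul hcv).mul hcv1))]
    exact integral_congr fun x _ => by ring
  have hBval : (∫ x in (0:ℝ)..1, (x - 1) * v x * v1 x)
      = -(1/2) * ∫ x in (0:ℝ)..1, v x ^ 2 := by
    rw [hBs, hv0] at hB; norm_num at hB; linarith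
  -- E5 : ∫ u1 u3 = - ∫ u2²
  have hE5 := integral_mul_deriv_eq_deriv_mul (a := 0) (b := 1)
    (fun x _ => hu1 x) (fun x _ => hu2 x) (hI _ hc2) (hI _ hc3)
  have hE5s : (∫ x in (0:ℝ)..1, u2 x * u2 x) = ∫ x in (0:ℝ)..1, u2 x ^ 2 :=
    integral_congr fun x _ => by ring
  have hE5val : (∫ x in (0:ℝ)..1, u1 x * u3 x) = - ∫ x in (0:ℝ)..1, u2 x ^ 2 := by
    rw [hE5s, hu10, hu21] at hE5; norm_num at hE5; linarith
  -- E6 : ∫ (x-1) u2 u3 = (1/2) u2 0 ^ 2 - (1/2) ∫ u2²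
  have hE6 := integral_mul_deriv_eq_deriv_mul (a := 0) (b := 1)
    (fun x _ => ((hasDerivAt_id x).sub_const 1).mul (hu2 x)) (fun x _ => hu2 x)
    (hI _ ((continuous_const.mul hc2).add (hid.mul hc3))) (hI _ hc3)
  simp only [id_eq] at hE6
  have hE6s : (∫ x in (0:ℝ)..1, (1 * u2 x + (x - 1) * u3 x) * u2 x)
      = (∫ x in (0:ℝ)..1, u2 x ^ 2) + ∫ x in (0:ℝ)..1, (x - 1) * u2 x * u3 x := by
    rw [← integral_add (hI (fun x => u2 x ^ 2) (hc2.pow 2)) (hI (fun x => (x - 1) * u2 x * u3 x) ((hid.mul hc2).mul hc3))]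
    exact integral_congr fun x _ => by ring
  have hE6val : (∫ x in (0:ℝ)..1, (x - 1) * u2 x * u3 x)
      = (1/2) * u2 0 ^ 2 - (1/2) * ∫ x in (0:ℝ)..1, u2 x ^ 2 := by
    rw [hE6s, hu21] at hE6; norm_num at hE6; linarith
  -- E4 : ∫ (x-1) u1 u4 = - ∫ u1 u3 - ∫ (x-1) u2 u3
  have hE4 := integral_mul_deriv_eq_deriv_mul (a := 0) (b := 1)
    (fun x _ => ((hasDerivAt_id x).sub_const 1).mul (hu1 x)) (fun x _ => hu3 x)
    (hI _ ((continuous_const.mul hc1).add (hid.mul hc2))) (hI _ hc4)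
  simp only [id_eq, Pi.mul_apply] at hE4
  have hE4s : (∫ x in (0:ℝ)..1, (1 * u1 x + (x - 1) * u2 x) * u3 x)
      = (∫ x in (0:ℝ)..1, u1 x * u3 x) + ∫ x in (0:ℝ)..1, (x - 1) * u2 x * u3 x := by
    rw [← integral_add (hI (fun x => u1 x * u3 x) (hc1.mul hc3)) (hI (fun x => (x - 1) * u2 x * u3 x) ((hid.mul hc2).mul hc3))]
    exact integral_congr fun x _ => by ring
  have hE4val : (∫ x in (0:ℝ)..1, (x - 1) * u1 x * u4 x)
      = (-(∫ x in (0:ℝ)..1, u1 x * u3 x)) - ∫ x in (0:ℝ)..1, (x - 1) * u2 x * u3 x := by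
    rw [hE4s, hu10] at hE4; norm_num at hE4; linarith
  -- assemble
  have hsplit : (∫ x in (0:ℝ)..1, ((x - 1) * aa x * u1 x + (x - 1) * v x * v1 x))
      = (∫ x in (0:ℝ)..1, (x - 1) * (- u4 x) * u1 x)
        + ∫ x in (0:ℝ)..1, (x - 1) * v x * v1 x := by
    rw [← integral_add (hI (fun x => (x - 1) * (- u4 x) * u1 x) ((hid.mul hc4.neg).mul hc1)) (hI (fun x => (x - 1) * v x * v1 x) ((hid.mul hcv).mul hcv1))]
    refine integral_congr fun x hx => ?_
    rw [Set.uIcc_of_le (by norm_num : (0:ℝ) ≤ 1)] at hx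
    rw [hpde x hx]
  have hneg : (∫ x in (0:ℝ)..1, (x - 1) * (- u4 x) * u1 x)
      = - ∫ x in (0:ℝ)..1, (x - 1) * u1 x * u4 x := by
    rw [← intervalIntegral.integral_neg]
    exact integral_congr fun x _ => by ring
  have hrhs : (∫ x in (0:ℝ)..1, ((v x)^2 + 3 * (u2 x)^2))
      = (∫ x in (0:ℝ)..1, v x ^ 2) + 3 * ∫ x in (0:ℝ)..1, u2 x ^ 2 := by
    rw [← intervalIntegral.integral_const_mul, ← integral_add (hI (fun x => v x ^ 2) (hcv.pow 2))
      (hI (fun x => 3 * u2 x ^ 2) (continuous_const.mul (hc2.pow 2)))]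
  rw [hsplit, hneg, hBval, hE4val, hE5val, hE6val, hrhs]
  ring

lemma main_aux (W : ℝ × ℝ → ℝ) (hW : ContDiff ℝ 4 W)
    (hpde : ∀ x ∈ Set.Icc (0:ℝ) 1, ∀ t ≥ (0:ℝ),
      pt (pt W) (x, t) + px (px (px (px W))) (x, t) = 0)
    (hb1 : ∀ t ≥ (0:ℝ), W (0, t) = 0)
    (hb2 : ∀ t ≥ (0:ℝ), px W (0, t) = 0)
    (hb3 : ∀ t ≥ (0:ℝ), px (px W) (1, t) = 0)
    (t : ℝ) (ht : 0 ≤ t) :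
    HasDerivAt (fun τ => ∫ x in (0:ℝ)..1, (x - 1) * pt W (x, τ) * px W (x, τ))
      ((1/2) * (px (px W) (0, t)) ^ 2
        - (1/2) * ∫ x in (0:ℝ)..1, ((pt W (x, t)) ^ 2 + 3 * (px (px W) (x, t)) ^ 2)) t := by
  -- regularity
  have e34 : ((3:WithTop ℕ∞)+1) = 4 := by norm_num
  have e23 : ((2:WithTop ℕ∞)+1) = 3 := by norm_num
  have e12 : ((1:WithTop ℕ∞)+1) = 2 := by norm_num
  have e01 : ((0:WithTop ℕ∞)+1) = 1 := by norm_num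
  have hx1 : ContDiff ℝ 3 (px W) := contDiff_px (e34 ▸ hW)
  have hx2 : ContDiff ℝ 2 (px (px W)) := contDiff_px (e23 ▸ hx1)
  have hx3 : ContDiff ℝ 1 (px (px (px W))) := contDiff_px (e12 ▸ hx2)
  have hx4 : ContDiff ℝ 0 (px (px (px (px W)))) := contDiff_px (e01 ▸ hx3)
  have ht1 : ContDiff ℝ 3 (pt W) := contDiff_pt (e34 ▸ hW)
  have ht2 : ContDiff ℝ 2 (pt (pt W)) := contDiff_pt (e23 ▸ ht1)
  have htx : ContDiff ℝ 2 (px (pt W)) := contDiff_px (e23 ▸ ht1)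
  have hxt : ContDiff ℝ 2 (pt (px W)) := contDiff_pt (e23 ▸ hx1)
  have one3 : (1 : WithTop ℕ∞) ≤ 3 := by norm_num
  have one2 : (1 : WithTop ℕ∞) ≤ 2 := by norm_num
  have cxt : ∀ s : ℝ, Continuous fun x : ℝ => (x, s) :=
    fun s => continuous_id.prodMk continuous_const
  have hid : Continuous fun x : ℝ => x - 1 := continuous_id.sub continuous_const
  -- wt(0,t) = 0
  have hv0 : pt W (0, t) = 0 := by
    have hcont : Continuous fun s => pt W (0, s) :=
      ht1.continuous.comp (continuous_const.prodMk continuous_id)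
    have hzero : ∀ s > (0:ℝ), pt W (0, s) = 0 := by
      intro s hs
      have hev : (fun b => W (0, b)) =ᶠ[nhds s] (fun _ => (0:ℝ)) := by
        filter_upwards [Ioi_mem_nhds hs] with y hy
        exact hb1 y (le_of_lt hy)
      show deriv (fun b => W (0, b)) s = 0
      rw [hev.deriv_eq, deriv_const]
    rcases eq_or_lt_of_le ht with h | h
    · have h1 : Filter.Tendsto (fun s => pt W (0, s)) (nhdsWithin 0 (Set.Ioi 0))
          (nhds (pt W (0, 0))) := (hcont.tendsto 0).mono_left nhdsWithin_le_nhds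
      have h2 : Filter.Tendsto (fun s => pt W (0, s)) (nhdsWithin 0 (Set.Ioi 0))
          (nhds 0) := by
        apply Filter.Tendsto.congr' _ tendsto_const_nhds
        filter_upwards [self_mem_nhdsWithin] with y hy
        exact (hzero y hy).symm
      rw [← h]
      exact tendsto_nhds_unique h1 h2
    · exact hzero t h
  -- differentiation under the integral sign
  set F' : ℝ → ℝ → ℝ := fun τ x =>
    (x - 1) * pt (pt W) (x, τ) * px W (x, τ) + (x - 1) * pt W (x, τ) * pt (px W) (x, τ)
    with hF'def
  have hgcont : Continuous fun p : ℝ × ℝ =>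
      (p.1 - 1) * pt (pt W) p * px W p + (p.1 - 1) * pt W p * pt (px W) p := by
    have h1 : Continuous fun p : ℝ × ℝ => p.1 - 1 :=
      continuous_fst.sub continuous_const
    exact ((h1.mul ht2.continuous).mul hx1.continuous).add
      ((h1.mul ht1.continuous).mul hxt.continuous)
  obtain ⟨C, hC⟩ := (isCompact_Icc.prod (isCompact_closedBall t 1)).exists_bound_of_continuousOn
    (hgcont.continuousOn)
  have key := (intervalIntegral.hasDerivAt_integral_of_dominated_loc_of_deriv_le
    (F := fun τ x => (x - 1) * pt W (x, τ) * px W (x, τ)) (F' := F')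
    (x₀ := t) (a := 0) (b := 1) (bound := fun _ => C) (μ := volume) (s := Metric.ball t 1) (Metric.ball_mem_nhds t one_pos)
    (Filter.Eventually.of_forall fun τ =>
      (((hid.mul (ht1.continuous.comp (cxt τ))).mul
        (hx1.continuous.comp (cxt τ)))).aestronglyMeasurable)
    (((hid.mul (ht1.continuous.comp (cxt t))).mul
        (hx1.continuous.comp (cxt t))).intervalIntegrable 0 1)
    ((hgcont.comp (cxt t)).aestronglyMeasurable)
    (Filter.Eventually.of_forall fun x hx τ hτ => by
      have hxmem : x ∈ Set.Icc (0:ℝ) 1 := by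
        rw [Set.uIoc_of_le (by norm_num : (0:ℝ) ≤ 1)] at hx
        exact ⟨le_of_lt hx.1, hx.2⟩
      exact hC (x, τ) ⟨hxmem, Metric.ball_subset_closedBall hτ⟩)
    (intervalIntegrable_const)
    (Filter.Eventually.of_forall fun x hx τ hτ => by
      have h1 : HasDerivAt (fun s => pt W (x, s)) (pt (pt W) (x, τ)) τ :=
        hasDerivAt_slice_t ((ht1.differentiable (by norm_num)) (x, τ))
      have h2 : HasDerivAt (fun s => px W (x, s)) (pt (px W) (x, τ)) τ :=
        hasDerivAt_slice_t ((hx1.differentiable (by norm_num)) (x, τ))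
      exact (h1.const_mul (x - 1)).mul h2)).2
  -- value of the derivative
  have hcomm : ∀ x : ℝ, pt (px W) (x, t) = px (pt W) (x, t) :=
    fun x => pt_px_comm (hW.of_le (by norm_num : (2:WithTop ℕ∞) ≤ 4)) (x, t)
  have hval : (∫ x in (0:ℝ)..1, F' t x)
      = (1/2) * (px (px W) (0, t)) ^ 2
        - (1/2) * ∫ x in (0:ℝ)..1, ((pt W (x, t)) ^ 2 + 3 * (px (px W) (x, t)) ^ 2) := by
    have hstep : (∫ x in (0:ℝ)..1, F' t x)
        = ∫ x in (0:ℝ)..1,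
            ((x - 1) * pt (pt W) (x, t) * px W (x, t)
              + (x - 1) * pt W (x, t) * px (pt W) (x, t)) := by
      refine integral_congr fun x _ => ?_
      rw [hF'def]
      simp only
      rw [hcomm x]
    rw [hstep]
    have := ibp_aux
      (fun x => px W (x, t)) (fun x => px (px W) (x, t))
      (fun x => px (px (px W)) (x, t)) (fun x => px (px (px (px W))) (x, t))
      (fun x => pt W (x, t)) (fun x => px (pt W) (x, t))
      (fun x => pt (pt W) (x, t))
      (fun x => hasDerivAt_slice_x ((hx1.differentiable (by norm_num)) (x, t)))
      (fun x => hasDerivAt_slice_x ((hx2.differentiable (by norm_num)) (x, t)))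
      (fun x => hasDerivAt_slice_x ((hx3.differentiable (by norm_num)) (x, t)))
      (fun x => hasDerivAt_slice_x ((ht1.differentiable (by norm_num)) (x, t)))
      (hx1.continuous.comp (cxt t)) (hx2.continuous.comp (cxt t))
      (hx3.continuous.comp (cxt t)) (hx4.continuous.comp (cxt t))
      (ht1.continuous.comp (cxt t)) (htx.continuous.comp (cxt t))
      (ht2.continuous.comp (cxt t))
      (fun x hx => by have := hpde x hx t ht; linarith)
      (hb2 t ht) (hb3 t ht) hv0
    convert this using 2
  rw [← hval]
  exact key

/-- For a C⁴ solution `w` of the Euler–Bernoulli beam equation on `[0,1]` with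
boundary conditions `w(0,t) = wₓ(0,t) = wₓₓ(1,t) = wₓₓₓ(1,t) = 0`, the
multiplier `ρ₁(t) = ∫₀¹ (x−1) wₜ(x,t) wₓ(x,t) dx` is differentiable with
`ρ₁′(t) = ½ wₓₓ(0,t)² − ½∫₀¹ (wₜ² + 3 wₓₓ²) dx`. -/
theorem euler_bernoulli_multiplier_derivative'
    (w : ℝ → ℝ → ℝ)
    (hw : ContDiff ℝ 4 (fun p : ℝ × ℝ => w p.1 p.2))
    (heq : ∀ x ∈ Set.Icc (0:ℝ) 1, ∀ t ≥ (0:ℝ),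
      iteratedDeriv 2 (fun τ => w x τ) t + iteratedDeriv 4 (fun ξ => w ξ t) x = 0)
    (hbc : ∀ t ≥ (0:ℝ),
      w 0 t = 0 ∧ deriv (fun ξ => w ξ t) 0 = 0 ∧
      iteratedDeriv 2 (fun ξ => w ξ t) 1 = 0 ∧
      iteratedDeriv 3 (fun ξ => w ξ t) 1 = 0) :
    ∀ t ≥ (0:ℝ),
      HasDerivAt
        (fun τ => ∫ x in (0:ℝ)..1,
          (x - 1) * deriv (fun s => w x s) τ * deriv (fun ξ => w ξ τ) x)
        ((1/2) * (iteratedDeriv 2 (fun ξ => w ξ t) 0) ^ 2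
          - (1/2) * (∫ x in (0:ℝ)..1,
              (deriv (fun s => w x s) t) ^ 2
                + 3 * (iteratedDeriv 2 (fun ξ => w ξ t) x) ^ 2)) t := by
  intro t ht
  have hpde' : ∀ x ∈ Set.Icc (0:ℝ) 1, ∀ s ≥ (0:ℝ),
      pt (pt (fun p : ℝ × ℝ => w p.1 p.2)) (x, s)
        + px (px (px (px (fun p : ℝ × ℝ => w p.1 p.2)))) (x, s) = 0 := by
    intro x hx s hs
    have h := heq x hx s hs
    rwa [et2, ex4] at h
  have hb1 : ∀ s ≥ (0:ℝ), (fun p : ℝ × ℝ => w p.1 p.2) (0, s) = 0 :=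
    fun s hs => (hbc s hs).1
  have hb2 : ∀ s ≥ (0:ℝ), px (fun p : ℝ × ℝ => w p.1 p.2) (0, s) = 0 := by
    intro s hs; rw [← ex1]; exact (hbc s hs).2.1
  have hb3 : ∀ s ≥ (0:ℝ), px (px (fun p : ℝ × ℝ => w p.1 p.2)) (1, s) = 0 := by
    intro s hs; rw [← ex2]; exact (hbc s hs).2.2.1
  have H := main_aux (fun p : ℝ × ℝ => w p.1 p.2) hw hpde' hb1 hb2 hb3 t ht
  simp only [ex2, et1, ex1]
  exact H
end

section
/- For every T > 0, the boundary trace of the bending moment at the left endpoint satisfies the observability inequality ∫₀ᵀ (∂ₓ²w(0,t))² dt ≥ (T − 2) F(0); in particular, for every T > 2 the system with output y(t) = ∂ₓ²w(0,t) is exactly observable at time T. -/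
open Real MeasureTheory intervalIntegral

noncomputable def pdX (f : ℝ × ℝ → ℝ) : ℝ × ℝ → ℝ := fun p => fderiv ℝ f p (1, 0)
noncomputable def pdT (f : ℝ × ℝ → ℝ) : ℝ × ℝ → ℝ := fun p => fderiv ℝ f p (0, 1)

lemma hasDerivAt_sliceX {f : ℝ × ℝ → ℝ} {x t : ℝ} (hf : DifferentiableAt ℝ f (x, t)) :
    HasDerivAt (fun ξ => f (ξ, t)) (pdX f (x, t)) x := by
  have h : HasDerivAt (fun ξ : ℝ => ((ξ, t) : ℝ × ℝ)) ((1 : ℝ), (0 : ℝ)) x :=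
    (hasDerivAt_id x).prodMk (hasDerivAt_const x t)
  exact hf.hasFDerivAt.comp_hasDerivAt x h

lemma hasDerivAt_sliceT {f : ℝ × ℝ → ℝ} {x t : ℝ} (hf : DifferentiableAt ℝ f (x, t)) :
    HasDerivAt (fun τ => f (x, τ)) (pdT f (x, t)) t := by
  have h : HasDerivAt (fun τ : ℝ => ((x, τ) : ℝ × ℝ)) ((0 : ℝ), (1 : ℝ)) t :=
    (hasDerivAt_const t x).prodMk (hasDerivAt_id t)
  exact hf.hasFDerivAt.comp_hasDerivAt t h

lemma contDiff_pdX {f : ℝ × ℝ → ℝ} {m : ℕ} (hf : ContDiff ℝ ((m + 1 : ℕ)) f) :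
    ContDiff ℝ (m : ℕ) (pdX f) := by
  have h : ContDiff ℝ (m : ℕ) (fderiv ℝ f) := hf.fderiv_right (by norm_cast)
  exact h.clm_apply contDiff_const

lemma contDiff_pdT {f : ℝ × ℝ → ℝ} {m : ℕ} (hf : ContDiff ℝ ((m + 1 : ℕ)) f) :
    ContDiff ℝ (m : ℕ) (pdT f) := by
  have h : ContDiff ℝ (m : ℕ) (fderiv ℝ f) := hf.fderiv_right (by norm_cast)
  exact h.clm_apply contDiff_const

lemma pd_comm_s14 {f : ℝ × ℝ → ℝ} (hf : ContDiff ℝ 2 f) : pdT (pdX f) = pdX (pdT f) := by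
  funext p
  have hd1 : Differentiable ℝ f := hf.differentiable (by norm_num)
  have hfd : ContDiff ℝ 1 (fderiv ℝ f) := hf.fderiv_right (by norm_num)
  have hfd' : DifferentiableAt ℝ (fderiv ℝ f) p := (hfd.differentiable one_ne_zero) p
  have hsymm := second_derivative_symmetric (f' := fderiv ℝ f)
    (f'' := fderiv ℝ (fderiv ℝ f) p) (fun y => (hd1 y).hasFDerivAt) hfd'.hasFDerivAt
  have hX : HasFDerivAt (pdX f)
      (((ContinuousLinearMap.apply ℝ ℝ ((1 : ℝ), (0 : ℝ))).comp
        (fderiv ℝ (fderiv ℝ f) p))) p :=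
    (ContinuousLinearMap.apply ℝ ℝ ((1 : ℝ), (0 : ℝ))).hasFDerivAt.comp p hfd'.hasFDerivAt
  have hT : HasFDerivAt (pdT f)
      (((ContinuousLinearMap.apply ℝ ℝ ((0 : ℝ), (1 : ℝ))).comp
        (fderiv ℝ (fderiv ℝ f) p))) p :=
    (ContinuousLinearMap.apply ℝ ℝ ((0 : ℝ), (1 : ℝ))).hasFDerivAt.comp p hfd'.hasFDerivAt
  have e1 : pdT (pdX f) p = fderiv ℝ (fderiv ℝ f) p (0, 1) (1, 0) := by
    show fderiv ℝ (pdX f) p (0, 1) = _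
    rw [hX.fderiv]; rfl
  have e2 : pdX (pdT f) p = fderiv ℝ (fderiv ℝ f) p (1, 0) (0, 1) := by
    show fderiv ℝ (pdT f) p (1, 0) = _
    rw [hT.fderiv]; rfl
  rw [e1, e2, hsymm (0,1) (1,0)]

/-- differentiation under the integral sign, continuous version -/
lemma hasDerivAt_param_integral (G G' : ℝ × ℝ → ℝ) (hG : Continuous G) (hG' : Continuous G')
    (hd : ∀ p : ℝ × ℝ, HasDerivAt (fun s => G (p.1, s)) (G' p) p.2) (t₀ : ℝ) :
    HasDerivAt (fun t => ∫ x in (0:ℝ)..1, G (x, t)) (∫ x in (0:ℝ)..1, G' (x, t₀)) t₀ := by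
  obtain ⟨C, hC⟩ : ∃ C, ∀ q ∈ (Set.Icc (0:ℝ) 1) ×ˢ (Metric.closedBall t₀ 1), ‖G' q‖ ≤ C := by
    have hcomp : IsCompact ((Set.Icc (0:ℝ) 1) ×ˢ (Metric.closedBall t₀ 1)) :=
      isCompact_Icc.prod (isCompact_closedBall _ _)
    exact hcomp.exists_bound_of_continuousOn hG'.continuousOn
  have key := intervalIntegral.hasDerivAt_integral_of_dominated_loc_of_deriv_le
    (F := fun t x => G (x, t)) (F' := fun t x => G' (x, t)) (a := (0:ℝ)) (b := 1)
    (x₀ := t₀) (bound := fun _ => C) (μ := volume) (s := Metric.ball t₀ 1)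
    (Metric.ball_mem_nhds t₀ one_pos)
    (Filter.Eventually.of_forall fun t =>
      (hG.comp (continuous_id.prodMk continuous_const)).aestronglyMeasurable)
    ((hG.comp (continuous_id.prodMk continuous_const)).intervalIntegrable _ _)
    ((hG'.comp (continuous_id.prodMk continuous_const)).aestronglyMeasurable)
    (Filter.Eventually.of_forall fun x hx t ht => by
      refine hC (x, t) ⟨?_, Metric.ball_subset_closedBall ht⟩
      simpa [Set.uIoc_of_le (by norm_num : (0:ℝ) ≤ 1)] using Set.Ioc_subset_Icc_self hx)
    (intervalIntegrable_const)
    (Filter.Eventually.of_forall fun x _ t _ => hd (x, t))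
  exact key.2

/-- Cauchy-Schwarz on `[0,x]` -/
lemma sq_integral_le (f : ℝ → ℝ) (hf : Continuous f) {x : ℝ} (hx : 0 ≤ x) :
    (∫ y in (0:ℝ)..x, f y) ^ 2 ≤ x * ∫ y in (0:ℝ)..x, (f y) ^ 2 := by
  set g : ℝ → ℝ := fun u => ∫ y in (0:ℝ)..u, f y with hg
  set G : ℝ → ℝ := fun u => ∫ y in (0:ℝ)..u, (f y) ^ 2 with hGdef
  have hgd : ∀ u, HasDerivAt g (f u) u := fun u =>
    (hf.integral_hasStrictDerivAt 0 u).hasDerivAt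
  have hGd : ∀ u, HasDerivAt G ((f u) ^ 2) u := fun u =>
    ((hf.pow 2).integral_hasStrictDerivAt 0 u).hasDerivAt
  set φ : ℝ → ℝ := fun u => u * G u - (g u) ^ 2 with hφdef
  have hφd : ∀ u, HasDerivAt φ (G u + u * (f u) ^ 2 - 2 * g u * f u) u := by
    intro u
    have h1 : HasDerivAt (fun u => u * G u) (1 * G u + u * (f u) ^ 2) u :=
      (hasDerivAt_id u).mul (hGd u)
    have h2 : HasDerivAt (fun u => (g u) ^ 2) (2 * g u ^ 1 * f u) u := (hgd u).pow 2
    simpa [pow_one, one_mul] using h1.fun_sub h2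
  have hderiv_nonneg : ∀ u, 0 ≤ u → 0 ≤ G u + u * (f u) ^ 2 - 2 * g u * f u := by
    intro u hu
    have e : G u + u * (f u) ^ 2 - 2 * g u * f u
        = ∫ y in (0:ℝ)..u, (f y - f u) ^ 2 := by
      have : ∀ y : ℝ, (f y - f u) ^ 2 = (f y) ^ 2 + (f u) ^ 2 - 2 * f u * f y := by
        intro y; ring
      rw [intervalIntegral.integral_congr (fun y _ => this y)]
      rw [intervalIntegral.integral_sub
        (((hf.fun_pow 2).fun_add continuous_const).intervalIntegrable _ _)
        ((continuous_const.fun_mul hf).intervalIntegrable _ _),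
        intervalIntegral.integral_add ((hf.fun_pow 2).intervalIntegrable _ _)
          intervalIntegrable_const,
        intervalIntegral.integral_const, intervalIntegral.integral_const_mul]
      simp only [smul_eq_mul, sub_zero]
      ring
    rw [e]
    apply intervalIntegral.integral_nonneg hu
    intro y _; positivity
  have hmono : MonotoneOn φ (Set.Ici 0) := by
    apply monotoneOn_of_deriv_nonneg (convex_Ici 0)
      (Continuous.continuousOn (by
        have : Continuous φ := by
          apply Continuous.sub (continuous_id.mul ?_) ((?_ : Continuous g).pow 2)
          · exact (intervalIntegral.continuous_primitive
              (fun a b => (hf.pow 2).intervalIntegrable a b) 0)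
          · exact (intervalIntegral.continuous_primitive
              (fun a b => hf.intervalIntegrable a b) 0)
        exact this))
      (fun u _ => (hφd u).differentiableAt.differentiableWithinAt)
    intro u hu
    rw [(hφd u).deriv]
    exact hderiv_nonneg u (le_of_lt (by simpa using hu))
  have h0 : φ 0 = 0 := by simp [hφdef, hg, hGdef]
  have hge := hmono (Set.self_mem_Ici) (Set.mem_Ici.mpr hx) hx
  rw [h0] at hge
  have hφx : φ x = x * G x - (g x) ^ 2 := rfl
  have : (g x) ^ 2 ≤ x * G x := by linarith
  simpa [hg, hGdef] using this

lemma deriv_eq_zero_of_zero_on_Ici {f : ℝ → ℝ} {t : ℝ} (hf : DifferentiableAt ℝ f t)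
    (h0 : ∀ s, 0 ≤ s → f s = 0) (ht : 0 ≤ t) : deriv f t = 0 := by
  have h1 : HasDerivWithinAt f (deriv f t) (Set.Ici t) t :=
    hf.hasDerivAt.hasDerivWithinAt
  have h2 : HasDerivWithinAt f 0 (Set.Ici t) t := by
    refine (hasDerivWithinAt_const t _ (0:ℝ)).congr (fun y hy => h0 y (le_trans ht hy)) ?_
    exact h0 t ht
  exact (uniqueDiffOn_Ici t t Set.self_mem_Ici).eq_deriv _ h1 h2

lemma abs_mul_le_half_sq (a b : ℝ) : |a * b| ≤ (a ^ 2 + b ^ 2) / 2 := by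
  rcases abs_cases (a * b) with ⟨h, _⟩ | ⟨h, _⟩ <;> nlinarith [sq_nonneg (a - b), sq_nonneg (a + b)]

/-- Observability inequality for the Euler–Bernoulli beam: under the boundary
conditions `w(0,t) = wₓ(0,t) = wₓₓ(1,t) = wₓₓₓ(1,t) = 0`, the bending moment
trace at the left endpoint satisfies `∫₀ᵀ wₓₓ(0,t)² dt ≥ (T − 2) F(0)` for
every `T > 0`; in particular, for every `T > 2` the output `y(t) = wₓₓ(0,t)`
is exactly observable at time `T`. -/
theorem euler_bernoulli_observability
    (w : ℝ → ℝ → ℝ)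
    (hw : ContDiff ℝ 4 (fun p : ℝ × ℝ => w p.1 p.2))
    (heq : ∀ x ∈ Set.Icc (0:ℝ) 1, ∀ t ≥ (0:ℝ),
      iteratedDeriv 2 (fun τ => w x τ) t + iteratedDeriv 4 (fun ξ => w ξ t) x = 0)
    (hbc : ∀ t ≥ (0:ℝ),
      w 0 t = 0 ∧ deriv (fun ξ => w ξ t) 0 = 0 ∧
      iteratedDeriv 2 (fun ξ => w ξ t) 1 = 0 ∧
      iteratedDeriv 3 (fun ξ => w ξ t) 1 = 0)
    (F : ℝ → ℝ)
    (hF : ∀ t, F t = (1/2) * ∫ x in (0:ℝ)..1,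
      (deriv (fun τ => w x τ) t) ^ 2 + (iteratedDeriv 2 (fun ξ => w ξ t) x) ^ 2) :
    (∀ T > (0:ℝ),
      (∫ t in (0:ℝ)..T, (iteratedDeriv 2 (fun ξ => w ξ t) 0) ^ 2) ≥
        (T - 2) * F 0) ∧
    (∀ T > (2:ℝ), ∃ k > (0:ℝ),
      (∫ t in (0:ℝ)..T, (iteratedDeriv 2 (fun ξ => w ξ t) 0) ^ 2) ≥ k * F 0) := by
  -- setup
  set W : ℝ × ℝ → ℝ := fun p => w p.1 p.2 with hWdef
  have hW4 : ContDiff ℝ ((3 + 1 : ℕ)) W := by exact_mod_cast hw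
  set a1 := pdX W with ha1def
  set a2 := pdX a1 with ha2def
  set a3 := pdX a2 with ha3def
  set a4 := pdX a3 with ha4def
  set b1 := pdT W with hb1def
  set b2 := pdT b1 with hb2def
  set c1 := pdT a1 with hc1def
  set c2 := pdT a2 with hc2def
  have hA1 : ContDiff ℝ ((2 + 1 : ℕ)) a1 := contDiff_pdX hW4
  have hA2 : ContDiff ℝ ((1 + 1 : ℕ)) a2 := contDiff_pdX hA1
  have hA3 : ContDiff ℝ ((0 + 1 : ℕ)) a3 := contDiff_pdX hA2
  have hA4 : Continuous a4 := (contDiff_pdX (m := 0) hA3).continuous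
  have hB1 : ContDiff ℝ ((2 + 1 : ℕ)) b1 := contDiff_pdT hW4
  have hB2 : ContDiff ℝ ((1 + 1 : ℕ)) b2 := contDiff_pdT hB1
  have hC1 : ContDiff ℝ ((1 + 1 : ℕ)) c1 := contDiff_pdT hA1
  have hC2 : ContDiff ℝ ((0 + 1 : ℕ)) c2 := contDiff_pdT hA2
  have hdW : Differentiable ℝ W := hW4.differentiable (by norm_num)
  have hda1 : Differentiable ℝ a1 := hA1.differentiable (by norm_num)
  have hda2 : Differentiable ℝ a2 := hA2.differentiable (by norm_num)
  have hda3 : Differentiable ℝ a3 := hA3.differentiable (by norm_num)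
  have hdb1 : Differentiable ℝ b1 := hB1.differentiable (by norm_num)
  have hdb2 : Differentiable ℝ b2 := hB2.differentiable (by norm_num)
  have hdc1 : Differentiable ℝ c1 := hC1.differentiable (by norm_num)
  -- mixed partials commute
  have hc1X : c1 = pdX b1 := pd_comm_s14 (hW4.of_le (by norm_num))
  have hc2X : c2 = pdX c1 := by
    have h := pd_comm_s14 (f := a1) (hA1.of_le (by norm_num))
    rw [hc2def, ha2def, h, hc1def]
  -- slice identities
  have ed1 : ∀ t x, deriv (fun ξ => w ξ t) x = a1 (x, t) :=
    fun t x => (hasDerivAt_sliceX (f := W) (hdW _)).deriv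
  have ed2 : ∀ t x, iteratedDeriv 2 (fun ξ => w ξ t) x = a2 (x, t) := by
    intro t x
    rw [show (2 : ℕ) = 1 + 1 from rfl, iteratedDeriv_succ, iteratedDeriv_one]
    have h : deriv (fun ξ => w ξ t) = fun ξ => a1 (ξ, t) := funext (ed1 t)
    rw [h]
    exact (hasDerivAt_sliceX (f := a1) (hda1 _)).deriv
  have ed3 : ∀ t x, iteratedDeriv 3 (fun ξ => w ξ t) x = a3 (x, t) := by
    intro t x
    rw [show (3 : ℕ) = 2 + 1 from rfl, iteratedDeriv_succ]
    have h : iteratedDeriv 2 (fun ξ => w ξ t) = fun ξ => a2 (ξ, t) := funext (ed2 t)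
    rw [h]
    exact (hasDerivAt_sliceX (f := a2) (hda2 _)).deriv
  have ed4 : ∀ t x, iteratedDeriv 4 (fun ξ => w ξ t) x = a4 (x, t) := by
    intro t x
    rw [show (4 : ℕ) = 3 + 1 from rfl, iteratedDeriv_succ]
    have h : iteratedDeriv 3 (fun ξ => w ξ t) = fun ξ => a3 (ξ, t) := funext (ed3 t)
    rw [h]
    exact (hasDerivAt_sliceX (f := a3) (hda3 _)).deriv
  have et1 : ∀ x t, deriv (fun τ => w x τ) t = b1 (x, t) :=
    fun x t => (hasDerivAt_sliceT (f := W) (hdW _)).deriv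
  have et2 : ∀ x t, iteratedDeriv 2 (fun τ => w x τ) t = b2 (x, t) := by
    intro x t
    rw [show (2 : ℕ) = 1 + 1 from rfl, iteratedDeriv_succ, iteratedDeriv_one]
    have h : deriv (fun τ => w x τ) = fun τ => b1 (x, τ) := funext (et1 x)
    rw [h]
    exact (hasDerivAt_sliceT (f := b1) (hdb1 _)).deriv
  -- PDE and boundary conditions in the new variables
  have pde : ∀ x ∈ Set.Icc (0:ℝ) 1, ∀ t ≥ (0:ℝ), b2 (x, t) = - a4 (x, t) := by
    intro x hx t ht
    have := heq x hx t ht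
    rw [et2 x t, ed4 t x] at this
    linarith
  have bc1 : ∀ t ≥ (0:ℝ), a1 (0, t) = 0 := by
    intro t ht
    have := (hbc t ht).2.1
    rw [ed1 t 0] at this; exact this
  have bc2 : ∀ t ≥ (0:ℝ), a2 (1, t) = 0 := by
    intro t ht
    have := (hbc t ht).2.2.1
    rw [ed2 t 1] at this; exact this
  have bc3 : ∀ t ≥ (0:ℝ), a3 (1, t) = 0 := by
    intro t ht
    have := (hbc t ht).2.2.2
    rw [ed3 t 1] at this; exact this
  have bb1 : ∀ t ≥ (0:ℝ), b1 (0, t) = 0 := by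
    intro t ht
    have hfd : DifferentiableAt ℝ (fun τ => W ((0:ℝ), τ)) t :=
      (hasDerivAt_sliceT (f := W) (hdW _)).differentiableAt
    have h := deriv_eq_zero_of_zero_on_Ici hfd (fun s hs => (hbc s hs).1) ht
    rw [(hasDerivAt_sliceT (f := W) (hdW _)).deriv] at h
    exact h
  have bb2 : ∀ t ≥ (0:ℝ), c1 (0, t) = 0 := by
    intro t ht
    have hfd : DifferentiableAt ℝ (fun τ => a1 ((0:ℝ), τ)) t :=
      (hasDerivAt_sliceT (f := a1) (hda1 _)).differentiableAt
    have h := deriv_eq_zero_of_zero_on_Ici hfd (fun s hs => bc1 s hs) ht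
    rw [(hasDerivAt_sliceT (f := a1) (hda1 _)).deriv] at h
    exact h
  -- slice continuity / integrability tools
  have contS : ∀ (f : ℝ × ℝ → ℝ), Continuous f → ∀ t : ℝ, Continuous fun x => f (x, t) :=
    fun f hf t => hf.comp (continuous_id.prodMk continuous_const)
  have contT : ∀ (f : ℝ × ℝ → ℝ), Continuous f → ∀ x : ℝ, Continuous fun t => f (x, t) :=
    fun f hf x => hf.comp (continuous_const.prodMk continuous_id)
  have ca1 := hA1.continuous
  have ca2 := hA2.continuous
  have ca3 := hA3.continuous
  have cb1 := hB1.continuous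
  have cb2 := hB2.continuous
  have cc1 := hC1.continuous
  have cc2 := hC2.continuous
  have cxm : Continuous fun x : ℝ => x - 1 := by continuity
  -- energy
  set E : ℝ → ℝ := fun t => ∫ x in (0:ℝ)..1, (b1 (x, t) ^ 2 + a2 (x, t) ^ 2) / 2 with hEdef
  have hEderiv : ∀ t, HasDerivAt E
      (∫ x in (0:ℝ)..1, (b1 (x, t) * b2 (x, t) + a2 (x, t) * c2 (x, t))) t := by
    intro t
    apply hasDerivAt_param_integral
      (fun p => (b1 p ^ 2 + a2 p ^ 2) / 2)
      (fun p => b1 p * b2 p + a2 p * c2 p)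
      (((cb1.pow 2).add (ca2.pow 2)).div_const 2)
      ((cb1.mul cb2).add (ca2.mul cc2))
      (fun p => by
        have h1 : HasDerivAt (fun s => b1 (p.1, s)) (b2 p) p.2 := by
          have := hasDerivAt_sliceT (f := b1) (x := p.1) (t := p.2) (hdb1 _)
          simpa using this
        have h2 : HasDerivAt (fun s => a2 (p.1, s)) (c2 p) p.2 := by
          have := hasDerivAt_sliceT (f := a2) (x := p.1) (t := p.2) (hda2 _)
          simpa using this
        have := ((h1.fun_pow 2).fun_add (h2.fun_pow 2)).div_const 2
        refine this.congr_deriv ?_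
        ring)
      t
  -- integration by parts: energy derivative vanishes for t ≥ 0
  have hE0 : ∀ t ≥ (0:ℝ),
      (∫ x in (0:ℝ)..1, (b1 (x, t) * b2 (x, t) + a2 (x, t) * c2 (x, t))) = 0 := by
    intro t ht
    have hIcc : Set.uIcc (0:ℝ) 1 = Set.Icc 0 1 := Set.uIcc_of_le (by norm_num)
    -- slice derivative facts
    have sb1 : ∀ x : ℝ, HasDerivAt (fun ξ => b1 (ξ, t)) (c1 (x, t)) x := fun x => by
      rw [hc1X]; exact hasDerivAt_sliceX (hdb1 _)
    have sc1 : ∀ x : ℝ, HasDerivAt (fun ξ => c1 (ξ, t)) (c2 (x, t)) x := fun x => by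
      rw [hc2X]; exact hasDerivAt_sliceX (hdc1 _)
    have sa3 : ∀ x : ℝ, HasDerivAt (fun ξ => a3 (ξ, t)) (a4 (x, t)) x := fun x =>
      hasDerivAt_sliceX (hda3 _)
    have sa2 : ∀ x : ℝ, HasDerivAt (fun ξ => a2 (ξ, t)) (a3 (x, t)) x := fun x =>
      hasDerivAt_sliceX (hda2 _)
    -- ∫ b1 * a4 = - ∫ c1 * a3
    have ibp1 : ∫ x in (0:ℝ)..1, b1 (x, t) * a4 (x, t)
        = - ∫ x in (0:ℝ)..1, c1 (x, t) * a3 (x, t) := by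
      have := intervalIntegral.integral_mul_deriv_eq_deriv_mul (a := (0:ℝ)) (b := (1:ℝ))
        (u := fun x => b1 (x, t)) (u' := fun x => c1 (x, t))
        (v := fun x => a3 (x, t)) (v' := fun x => a4 (x, t))
        (fun x _ => sb1 x) (fun x _ => sa3 x)
        ((contS c1 cc1 t).intervalIntegrable _ _)
        ((contS a4 hA4 t).intervalIntegrable _ _)
      rw [this]
      simp only [bb1 t ht, bc3 t ht]
      ring
    -- ∫ c1 * a3 = - ∫ c2 * a2
    have ibp2 : ∫ x in (0:ℝ)..1, c1 (x, t) * a3 (x, t)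
        = - ∫ x in (0:ℝ)..1, c2 (x, t) * a2 (x, t) := by
      have := intervalIntegral.integral_mul_deriv_eq_deriv_mul (a := (0:ℝ)) (b := (1:ℝ))
        (u := fun x => c1 (x, t)) (u' := fun x => c2 (x, t))
        (v := fun x => a2 (x, t)) (v' := fun x => a3 (x, t))
        (fun x _ => sc1 x) (fun x _ => sa2 x)
        ((contS c2 cc2 t).intervalIntegrable _ _)
        ((contS a3 ca3 t).intervalIntegrable _ _)
      rw [this]
      simp only [bb2 t ht, bc2 t ht]
      ring
    -- use the PDE
    have hpde : ∫ x in (0:ℝ)..1, b1 (x, t) * b2 (x, t)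
        = - ∫ x in (0:ℝ)..1, b1 (x, t) * a4 (x, t) := by
      rw [← intervalIntegral.integral_neg]
      apply intervalIntegral.integral_congr
      intro x hx
      rw [hIcc] at hx
      simp only [pde x hx t ht]
      ring
    rw [intervalIntegral.integral_add
      (((contS b1 cb1 t).fun_mul (contS b2 cb2 t)).intervalIntegrable _ _)
      (((contS a2 ca2 t).fun_mul (contS c2 cc2 t)).intervalIntegrable _ _),
      hpde, ibp1, ibp2]
    have : ∫ x in (0:ℝ)..1, a2 (x, t) * c2 (x, t)
        = ∫ x in (0:ℝ)..1, c2 (x, t) * a2 (x, t) :=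
      intervalIntegral.integral_congr (fun x _ => mul_comm _ _)
    rw [this]
    ring
  -- energy conservation
  have Econs : ∀ t ≥ (0:ℝ), E t = E 0 := by
    intro t ht
    have hftc : ∫ s in (0:ℝ)..t, (0:ℝ) = E t - E 0 := by
      apply intervalIntegral.integral_eq_sub_of_hasDerivAt
      · intro s hs
        rw [Set.uIcc_of_le ht] at hs
        have h := hEderiv s
        rw [hE0 s hs.1] at h
        exact h
      · exact intervalIntegrable_const
    simp only [intervalIntegral.integral_zero] at hftc
    linarith
  have hEnonneg : ∀ t, 0 ≤ E t := by
    intro t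
    apply intervalIntegral.integral_nonneg (by norm_num)
    intro x _; positivity
  -- F 0 = E 0
  have hF0 : F 0 = E 0 := by
    rw [hF 0]
    have hE0eq : E 0 = ∫ x in (0:ℝ)..1, (b1 (x, 0) ^ 2 + a2 (x, 0) ^ 2) / 2 := rfl
    rw [hE0eq, intervalIntegral.integral_div]
    rw [show ∫ x in (0:ℝ)..1,
        ((deriv (fun τ => w x τ) 0) ^ 2 + (iteratedDeriv 2 (fun ξ => w ξ 0) x) ^ 2)
        = ∫ x in (0:ℝ)..1, (b1 (x, 0) ^ 2 + a2 (x, 0) ^ 2) from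
      intervalIntegral.integral_congr (fun x _ => by rw [et1 x 0, ed2 0 x])]
    ring
  -- the multiplier functional
  set R : ℝ → ℝ := fun t => ∫ x in (0:ℝ)..1, (x - 1) * a1 (x, t) * b1 (x, t) with hRdef
  set Rd : ℝ → ℝ := fun t => ∫ x in (0:ℝ)..1,
      (x - 1) * (c1 (x, t) * b1 (x, t) + a1 (x, t) * b2 (x, t)) with hRddef
  have hRderiv : ∀ t, HasDerivAt R (Rd t) t := by
    intro t
    apply hasDerivAt_param_integral
      (fun p => (p.1 - 1) * a1 p * b1 p)
      (fun p => (p.1 - 1) * (c1 p * b1 p + a1 p * b2 p))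
      (((continuous_fst.sub continuous_const).mul ca1).mul cb1)
      ((continuous_fst.sub continuous_const).mul ((cc1.mul cb1).add (ca1.mul cb2)))
      (fun p => by
        have h1 : HasDerivAt (fun s => a1 (p.1, s)) (c1 p) p.2 := by
          have := hasDerivAt_sliceT (f := a1) (x := p.1) (t := p.2) (hda1 _)
          simpa using this
        have h2 : HasDerivAt (fun s => b1 (p.1, s)) (b2 p) p.2 := by
          have := hasDerivAt_sliceT (f := b1) (x := p.1) (t := p.2) (hdb1 _)
          simpa using this
        have := (h1.const_mul (p.1 - 1)).fun_mul h2
        refine this.congr_deriv ?_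
        ring)
      t
  -- continuity of Rd
  have hRdcont : Continuous Rd := by
    have : Continuous (Function.uncurry fun t x =>
        (x - 1) * (c1 (x, t) * b1 (x, t) + a1 (x, t) * b2 (x, t))) := by
      apply Continuous.mul
      · exact (continuous_snd.sub continuous_const)
      · have hsw : Continuous fun q : ℝ × ℝ => ((q.2, q.1) : ℝ × ℝ) :=
          continuous_snd.prodMk continuous_fst
        exact ((cc1.comp hsw).mul (cb1.comp hsw)).add ((ca1.comp hsw).mul (cb2.comp hsw))
    exact intervalIntegral.continuous_parametric_intervalIntegral_of_continuous' this 0 1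
  -- key identity for Rd
  have hkey : ∀ t ≥ (0:ℝ), a2 (0, t) ^ 2
      = 2 * Rd t + ∫ x in (0:ℝ)..1, (b1 (x, t) ^ 2 + 3 * a2 (x, t) ^ 2) := by
    intro t ht
    have hIcc : Set.uIcc (0:ℝ) 1 = Set.Icc 0 1 := Set.uIcc_of_le (by norm_num)
    have sa1 : ∀ x : ℝ, HasDerivAt (fun ξ => a1 (ξ, t)) (a2 (x, t)) x := fun x =>
      hasDerivAt_sliceX (hda1 _)
    have sa2 : ∀ x : ℝ, HasDerivAt (fun ξ => a2 (ξ, t)) (a3 (x, t)) x := fun x =>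
      hasDerivAt_sliceX (hda2 _)
    have sa3 : ∀ x : ℝ, HasDerivAt (fun ξ => a3 (ξ, t)) (a4 (x, t)) x := fun x =>
      hasDerivAt_sliceX (hda3 _)
    have sb1 : ∀ x : ℝ, HasDerivAt (fun ξ => b1 (ξ, t)) (c1 (x, t)) x := fun x => by
      rw [hc1X]; exact hasDerivAt_sliceX (hdb1 _)
    have vb : ∀ x : ℝ, HasDerivAt (fun ξ => b1 (ξ, t) ^ 2 / 2)
        (b1 (x, t) * c1 (x, t)) x := fun x => by
      have := ((sb1 x).fun_pow 2).div_const 2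
      refine this.congr_deriv ?_; ring
    have va : ∀ x : ℝ, HasDerivAt (fun ξ => a2 (ξ, t) ^ 2 / 2)
        (a2 (x, t) * a3 (x, t)) x := fun x => by
      have := ((sa2 x).fun_pow 2).div_const 2
      refine this.congr_deriv ?_; ring
    have ua : ∀ x : ℝ, HasDerivAt (fun ξ => (ξ - 1) * a1 (ξ, t))
        (a1 (x, t) + (x - 1) * a2 (x, t)) x := fun x => by
      have := ((hasDerivAt_id x).sub_const 1).fun_mul (sa1 x)
      refine this.congr_deriv ?_
      simp only [id_eq]; ring
    -- eq1
    have eq1 : ∫ x in (0:ℝ)..1, (x - 1) * (b1 (x, t) * c1 (x, t))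
        = - ∫ x in (0:ℝ)..1, b1 (x, t) ^ 2 / 2 := by
      have h := intervalIntegral.integral_mul_deriv_eq_deriv_mul (a := (0:ℝ)) (b := (1:ℝ))
        (u := fun x => x - 1) (u' := fun _ => 1)
        (v := fun x => b1 (x, t) ^ 2 / 2) (v' := fun x => b1 (x, t) * c1 (x, t))
        (fun x _ => (hasDerivAt_id x).sub_const 1) (fun x _ => vb x)
        intervalIntegrable_const
        (((contS b1 cb1 t).mul (contS c1 cc1 t)).intervalIntegrable _ _)
      rw [h]
      simp only [bb1 t ht, one_mul]
      norm_num
    -- eq2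
    have eq2 : ∫ x in (0:ℝ)..1, ((x - 1) * a1 (x, t)) * a4 (x, t)
        = - ∫ x in (0:ℝ)..1, (a1 (x, t) + (x - 1) * a2 (x, t)) * a3 (x, t) := by
      have h := intervalIntegral.integral_mul_deriv_eq_deriv_mul (a := (0:ℝ)) (b := (1:ℝ))
        (u := fun x => (x - 1) * a1 (x, t)) (u' := fun x => a1 (x, t) + (x - 1) * a2 (x, t))
        (v := fun x => a3 (x, t)) (v' := fun x => a4 (x, t))
        (fun x _ => ua x) (fun x _ => sa3 x)
        (((contS a1 ca1 t).add (cxm.mul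
          (contS a2 ca2 t))).intervalIntegrable _ _)
        ((contS a4 hA4 t).intervalIntegrable _ _)
      rw [h]
      simp only [bc1 t ht, bc3 t ht]
      ring
    -- eq3
    have eq3 : ∫ x in (0:ℝ)..1, a1 (x, t) * a3 (x, t)
        = - ∫ x in (0:ℝ)..1, a2 (x, t) ^ 2 := by
      have h := intervalIntegral.integral_mul_deriv_eq_deriv_mul (a := (0:ℝ)) (b := (1:ℝ))
        (u := fun x => a1 (x, t)) (u' := fun x => a2 (x, t))
        (v := fun x => a2 (x, t)) (v' := fun x => a3 (x, t))
        (fun x _ => sa1 x) (fun x _ => sa2 x)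
        ((contS a2 ca2 t).intervalIntegrable _ _)
        ((contS a3 ca3 t).intervalIntegrable _ _)
      rw [h]
      simp only [bc1 t ht, bc2 t ht]
      rw [show (∫ x in (0:ℝ)..1, a2 (x, t) * a2 (x, t))
          = ∫ x in (0:ℝ)..1, a2 (x, t) ^ 2 from
        intervalIntegral.integral_congr (fun x _ => by ring)]
      ring
    -- eq4
    have eq4 : ∫ x in (0:ℝ)..1, (x - 1) * (a2 (x, t) * a3 (x, t))
        = a2 (0, t) ^ 2 / 2 - ∫ x in (0:ℝ)..1, a2 (x, t) ^ 2 / 2 := by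
      have h := intervalIntegral.integral_mul_deriv_eq_deriv_mul (a := (0:ℝ)) (b := (1:ℝ))
        (u := fun x => x - 1) (u' := fun _ => 1)
        (v := fun x => a2 (x, t) ^ 2 / 2) (v' := fun x => a2 (x, t) * a3 (x, t))
        (fun x _ => (hasDerivAt_id x).sub_const 1) (fun x _ => va x)
        intervalIntegrable_const
        (((contS a2 ca2 t).mul (contS a3 ca3 t)).intervalIntegrable _ _)
      rw [h]
      simp only [one_mul]
      ring
    -- split Rd
    have hsplit : Rd t = (∫ x in (0:ℝ)..1, (x - 1) * (b1 (x, t) * c1 (x, t)))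
        + ∫ x in (0:ℝ)..1, -(((x - 1) * a1 (x, t)) * a4 (x, t)) := by
      show (∫ x in (0:ℝ)..1, (x - 1) * (c1 (x, t) * b1 (x, t) + a1 (x, t) * b2 (x, t))) = _
      rw [intervalIntegral.integral_congr (g := fun x =>
          (x - 1) * (b1 (x, t) * c1 (x, t)) + -(((x - 1) * a1 (x, t)) * a4 (x, t)))
        (fun x hx => by
          rw [hIcc] at hx
          simp only [pde x hx t ht]
          ring)]
      rw [intervalIntegral.integral_add
        ((cxm.fun_mul
          ((contS b1 cb1 t).fun_mul (contS c1 cc1 t))).intervalIntegrable _ _)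
        (((cxm.fun_mul (contS a1 ca1 t)).fun_mul
          (contS a4 hA4 t)).fun_neg.intervalIntegrable _ _)]
    have hneg : ∫ x in (0:ℝ)..1, -(((x - 1) * a1 (x, t)) * a4 (x, t))
        = - ∫ x in (0:ℝ)..1, ((x - 1) * a1 (x, t)) * a4 (x, t) :=
      intervalIntegral.integral_neg
    have hsplit2 : ∫ x in (0:ℝ)..1, (a1 (x, t) + (x - 1) * a2 (x, t)) * a3 (x, t)
        = (∫ x in (0:ℝ)..1, a1 (x, t) * a3 (x, t))
          + ∫ x in (0:ℝ)..1, (x - 1) * (a2 (x, t) * a3 (x, t)) := by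
      rw [intervalIntegral.integral_congr (g := fun x =>
          a1 (x, t) * a3 (x, t) + (x - 1) * (a2 (x, t) * a3 (x, t)))
        (fun x _ => by ring)]
      rw [intervalIntegral.integral_add
        (((contS a1 ca1 t).fun_mul (contS a3 ca3 t)).intervalIntegrable _ _)
        ((cxm.fun_mul
          ((contS a2 ca2 t).fun_mul (contS a3 ca3 t))).intervalIntegrable _ _)]
    have hRdval : Rd t = - (∫ x in (0:ℝ)..1, b1 (x, t) ^ 2 / 2)
        + (- (∫ x in (0:ℝ)..1, a2 (x, t) ^ 2)
          + (a2 (0, t) ^ 2 / 2 - ∫ x in (0:ℝ)..1, a2 (x, t) ^ 2 / 2)) := by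
      rw [hsplit, hneg, eq2, eq1, neg_neg, hsplit2, eq3, eq4]
    have hsum : ∫ x in (0:ℝ)..1, (b1 (x, t) ^ 2 + 3 * a2 (x, t) ^ 2)
        = (∫ x in (0:ℝ)..1, b1 (x, t) ^ 2) + 3 * ∫ x in (0:ℝ)..1, a2 (x, t) ^ 2 := by
      rw [intervalIntegral.integral_add
        (((contS b1 cb1 t).fun_pow 2).intervalIntegrable _ _)
        ((continuous_const.fun_mul ((contS a2 ca2 t).fun_pow 2)).intervalIntegrable _ _),
        intervalIntegral.integral_const_mul]
    have hd1 : ∫ x in (0:ℝ)..1, b1 (x, t) ^ 2 / 2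
        = (∫ x in (0:ℝ)..1, b1 (x, t) ^ 2) / 2 := intervalIntegral.integral_div 2 _
    have hd2 : ∫ x in (0:ℝ)..1, a2 (x, t) ^ 2 / 2
        = (∫ x in (0:ℝ)..1, a2 (x, t) ^ 2) / 2 := intervalIntegral.integral_div 2 _
    rw [hsum]
    rw [hd1, hd2] at hRdval
    linarith
  -- energy lower bound pointwise in time
  have hEt : ∀ t : ℝ, E t = ((∫ x in (0:ℝ)..1, b1 (x, t) ^ 2)
      + ∫ x in (0:ℝ)..1, a2 (x, t) ^ 2) / 2 := by
    intro t
    have h1 : E t = ∫ x in (0:ℝ)..1, (b1 (x, t) ^ 2 + a2 (x, t) ^ 2) / 2 := rfl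
    rw [h1, intervalIntegral.integral_div, intervalIntegral.integral_add
      (((contS b1 cb1 t).fun_pow 2).intervalIntegrable _ _)
      (((contS a2 ca2 t).fun_pow 2).intervalIntegrable _ _)]
  have hlow : ∀ t ≥ (0:ℝ), 2 * Rd t + 2 * E 0 ≤ a2 (0, t) ^ 2 := by
    intro t ht
    rw [hkey t ht]
    have hmono : (∫ x in (0:ℝ)..1, (b1 (x, t) ^ 2 + a2 (x, t) ^ 2))
        ≤ ∫ x in (0:ℝ)..1, (b1 (x, t) ^ 2 + 3 * a2 (x, t) ^ 2) := by
      apply intervalIntegral.integral_mono_on (by norm_num)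
        ((((contS b1 cb1 t).fun_pow 2).fun_add ((contS a2 ca2 t).fun_pow 2)).intervalIntegrable _ _)
        ((((contS b1 cb1 t).fun_pow 2).fun_add
          (continuous_const.fun_mul ((contS a2 ca2 t).fun_pow 2))).intervalIntegrable _ _)
      intro x _
      nlinarith [sq_nonneg (a2 (x, t))]
    have hsum2 : (∫ x in (0:ℝ)..1, (b1 (x, t) ^ 2 + a2 (x, t) ^ 2))
        = (∫ x in (0:ℝ)..1, b1 (x, t) ^ 2) + ∫ x in (0:ℝ)..1, a2 (x, t) ^ 2 :=
      intervalIntegral.integral_add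
        (((contS b1 cb1 t).pow 2).intervalIntegrable _ _)
        (((contS a2 ca2 t).pow 2).intervalIntegrable _ _)
    have hE := hEt t
    have hEc := Econs t ht
    linarith
  -- bound |R t| ≤ E 0 for t ≥ 0
  have Rbound : ∀ t ≥ (0:ℝ), |R t| ≤ E 0 := by
    intro t ht
    have habs : |R t| ≤ ∫ x in (0:ℝ)..1, |(x - 1) * a1 (x, t) * b1 (x, t)| :=
      intervalIntegral.abs_integral_le_integral_abs (by norm_num)
    have hpt : ∀ x ∈ Set.Icc (0:ℝ) 1, |(x - 1) * a1 (x, t) * b1 (x, t)|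
        ≤ (a1 (x, t) ^ 2 + b1 (x, t) ^ 2) / 2 := by
      intro x hx
      have h1 : |(x - 1) * a1 (x, t) * b1 (x, t)|
          = |x - 1| * |a1 (x, t) * b1 (x, t)| := by
        rw [mul_assoc, abs_mul]
      have h2 : |x - 1| ≤ 1 := abs_le.mpr ⟨by linarith [hx.1], by linarith [hx.2]⟩
      have h3 := abs_mul_le_half_sq (a1 (x, t)) (b1 (x, t))
      have h4 : (0:ℝ) ≤ |a1 (x, t) * b1 (x, t)| := abs_nonneg _
      calc |(x - 1) * a1 (x, t) * b1 (x, t)|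
          = |x - 1| * |a1 (x, t) * b1 (x, t)| := h1
        _ ≤ 1 * |a1 (x, t) * b1 (x, t)| := by nlinarith
        _ = |a1 (x, t) * b1 (x, t)| := one_mul _
        _ ≤ (a1 (x, t) ^ 2 + b1 (x, t) ^ 2) / 2 := h3
    have hint1 : (∫ x in (0:ℝ)..1, |(x - 1) * a1 (x, t) * b1 (x, t)|)
        ≤ ∫ x in (0:ℝ)..1, (a1 (x, t) ^ 2 + b1 (x, t) ^ 2) / 2 := by
      apply intervalIntegral.integral_mono_on (by norm_num)
        (((cxm.mul (contS a1 ca1 t)).mul (contS b1 cb1 t)).abs.intervalIntegrable _ _)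
        (((((contS a1 ca1 t).pow 2).add ((contS b1 cb1 t).pow 2)).div_const 2).intervalIntegrable _ _)
      exact hpt
    have hsplit3 : (∫ x in (0:ℝ)..1, (a1 (x, t) ^ 2 + b1 (x, t) ^ 2) / 2)
        = ((∫ x in (0:ℝ)..1, a1 (x, t) ^ 2) + ∫ x in (0:ℝ)..1, b1 (x, t) ^ 2) / 2 := by
      rw [intervalIntegral.integral_div, intervalIntegral.integral_add
        (((contS a1 ca1 t).fun_pow 2).intervalIntegrable _ _)
        (((contS b1 cb1 t).fun_pow 2).intervalIntegrable _ _)]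
    -- Poincaré inequality
    have hP : (∫ x in (0:ℝ)..1, a1 (x, t) ^ 2) ≤ ∫ x in (0:ℝ)..1, a2 (x, t) ^ 2 := by
      have hpt2 : ∀ x ∈ Set.Icc (0:ℝ) 1, a1 (x, t) ^ 2 ≤ ∫ y in (0:ℝ)..1, a2 (y, t) ^ 2 := by
        intro x hx
        have hrep : ∫ y in (0:ℝ)..x, a2 (y, t) = a1 (x, t) := by
          have h := intervalIntegral.integral_eq_sub_of_hasDerivAt (a := (0:ℝ)) (b := x)
            (f := fun ξ => a1 (ξ, t)) (f' := fun ξ => a2 (ξ, t))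
            (fun y _ => hasDerivAt_sliceX (hda1 _))
            ((contS a2 ca2 t).intervalIntegrable _ _)
          rw [h]
          simp only [bc1 t ht, sub_zero]
        have hcs := sq_integral_le (fun y => a2 (y, t)) (contS a2 ca2 t) hx.1
        rw [hrep] at hcs
        have hadj := intervalIntegral.integral_add_adjacent_intervals
          (μ := volume) (a := (0:ℝ)) (b := x) (c := 1)
          (((contS a2 ca2 t).fun_pow 2).intervalIntegrable _ _)
          (((contS a2 ca2 t).fun_pow 2).intervalIntegrable _ _)
        have hnn : (0:ℝ) ≤ ∫ y in x..1, a2 (y, t) ^ 2 :=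
          intervalIntegral.integral_nonneg hx.2 (fun y _ => sq_nonneg _)
        have hnn2 : (0:ℝ) ≤ ∫ y in (0:ℝ)..x, a2 (y, t) ^ 2 :=
          intervalIntegral.integral_nonneg hx.1 (fun y _ => sq_nonneg _)
        nlinarith [hx.1, hx.2]
      have := intervalIntegral.integral_mono_on (μ := volume) (a := (0:ℝ)) (b := 1) (by norm_num)
        (((contS a1 ca1 t).pow 2).intervalIntegrable _ _)
        (_root_.intervalIntegrable_const (c := ∫ y in (0:ℝ)..1, a2 (y, t) ^ 2))
        hpt2
      simpa using this
    have hEc := Econs t ht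
    have hE := hEt t
    linarith
  -- FTC for R
  have hRftc : ∀ T : ℝ, (∫ t in (0:ℝ)..T, Rd t) = R T - R 0 := fun T =>
    intervalIntegral.integral_eq_sub_of_hasDerivAt (fun s _ => hRderiv s)
      (hRdcont.intervalIntegrable _ _)
  -- continuity of the observation
  have hobs_cont : Continuous fun t => a2 ((0:ℝ), t) ^ 2 := (contT a2 ca2 0).pow 2
  -- main estimate
  have main : ∀ T > (0:ℝ),
      (∫ t in (0:ℝ)..T, (iteratedDeriv 2 (fun ξ => w ξ t) 0) ^ 2) ≥ (T - 2) * F 0 := by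
    intro T hT
    have hT0 : (0:ℝ) ≤ T := le_of_lt hT
    have hLHS : (∫ t in (0:ℝ)..T, (iteratedDeriv 2 (fun ξ => w ξ t) 0) ^ 2)
        = ∫ t in (0:ℝ)..T, a2 (0, t) ^ 2 :=
      intervalIntegral.integral_congr (fun t _ => by rw [ed2 t 0])
    have hmono2 : (∫ t in (0:ℝ)..T, (2 * Rd t + 2 * E 0))
        ≤ ∫ t in (0:ℝ)..T, a2 (0, t) ^ 2 := by
      apply intervalIntegral.integral_mono_on hT0
        (((continuous_const.mul hRdcont).add continuous_const).intervalIntegrable _ _)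
        (hobs_cont.intervalIntegrable _ _)
      intro s hs
      exact hlow s hs.1
    have hval : (∫ t in (0:ℝ)..T, (2 * Rd t + 2 * E 0))
        = 2 * (R T - R 0) + (T - 0) * (2 * E 0) := by
      rw [intervalIntegral.integral_add
        ((continuous_const.fun_mul hRdcont).intervalIntegrable _ _)
        intervalIntegrable_const,
        intervalIntegral.integral_const_mul, hRftc, intervalIntegral.integral_const]
      simp [smul_eq_mul]
    have hRT := Rbound T hT0
    have hR0 := Rbound 0 le_rfl
    have hnonnegLHS : 0 ≤ ∫ t in (0:ℝ)..T, a2 (0, t) ^ 2 :=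
      intervalIntegral.integral_nonneg hT0 (fun s _ => sq_nonneg _)
    have hE0 : 0 ≤ E 0 := hEnonneg 0
    rw [hLHS, ge_iff_le, hF0]
    have habs1 : -(E 0) ≤ R T := (abs_le.mp hRT).1
    have habs2 : R 0 ≤ E 0 := (abs_le.mp hR0).2
    rcases le_or_gt 2 T with h2 | h2
    · have hprod : 0 ≤ (T - 2) * E 0 := mul_nonneg (by linarith) hE0
      linarith
    · have hprod : 0 ≤ (2 - T) * E 0 := mul_nonneg (by linarith) hE0
      linarith
  exact ⟨main, fun T hT => ⟨T - 2, by linarith, by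
    have := main T (by linarith)
    rw [hF0] at this ⊢
    exact this⟩⟩
end
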